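/- arXiv:math/9702234 — 5 statements merged into one kernel-verified Lean document; each statement's English description precedes it below -/
import Mathlib

section
/- Let p be an odd prime and let q be a prime with q ≠ p. Then the abelian group H¹(Γ₂(p); M ⊕ M*) has no q-torsion: if x ∈ H¹(Γ₂(p); M ⊕ M*) satisfies q·x = 0, then x = 0. -/
open Matrix CongruenceSubgroup

/-- The monoid homomorphism from linear automorphisms to linear endomorphisms. -/
def linEquivToEnd {R M : Type*} [CommRing R] [AddCommGroup M] [Module R M] :
    (M ≃ₗ[R] M) →* (M →ₗ[R] M) where
  toFun e := e.toLinearMap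
  map_one' := rfl
  map_mul' _ _ := rfl

/-- `A ↦ (Aᵀ)⁻¹ = (A⁻¹)ᵀ` as an endomorphism of `SL(n,R)`. -/
def dualSL {n : Type*} [DecidableEq n] [Fintype n] {R : Type*} [CommRing R] :
    Matrix.SpecialLinearGroup n R →* Matrix.SpecialLinearGroup n R where
  toFun A := (A⁻¹).transpose
  map_one' := by
    apply Subtype.ext
    simp [Matrix.SpecialLinearGroup.transpose]
  map_mul' A B := by
    apply Subtype.ext
    simp [Matrix.SpecialLinearGroup.transpose, Matrix.transpose_mul, _root_.mul_inv_rev]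
    rfl

/-- The standard representation `M` of `Γ₂(p)` on `ℤ²`:  `A` acts by `v ↦ A·v`. -/
noncomputable def repM (p : ℕ) : Representation ℤ (Gamma p) (Fin 2 → ℤ) :=
  (linEquivToEnd.comp Matrix.SpecialLinearGroup.toLin').comp (Gamma p).subtype

/-- The dual representation `M*` of `Γ₂(p)` on `ℤ²`:  `A` acts by `v ↦ (Aᵀ)⁻¹·v`. -/
noncomputable def repMdual (p : ℕ) : Representation ℤ (Gamma p) (Fin 2 → ℤ) :=
  ((linEquivToEnd.comp Matrix.SpecialLinearGroup.toLin').comp dualSL).comp (Gamma p).subtype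

/-- The direct sum `M ⊕ M*` as a representation of `Γ₂(p)` on `ℤ⁴`. -/
noncomputable def repSum (p : ℕ) :
    Representation ℤ (Gamma p) ((Fin 2 → ℤ) × (Fin 2 → ℤ)) :=
  ((LinearMap.prodMapRingHom ℤ _ _).toMonoidHom).comp (MonoidHom.prod (repM p) (repMdual p))

/-! If `q • [f] = 0` then `q • f = dv` for some `v ∈ ℤ⁴`. Applying this to the unipotents
`[[1, p], [0, 1]]` and `[[1, 0], [p, 1]]` of `Γ(p)`, which act on `M ⊕ M*` as `1 + p·N` with `N`
nilpotent, shows that `q` divides `p·vᵢ` for every coordinate, hence `v = q • w` as `q ∤ p`.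
Then `q • (f - dw) = 0`, and `ℤ⁴` is torsion-free, so `f = dw`. -/

namespace groupCohomology

variable {G V : Type} [Group G] [AddCommGroup V] [Module.IsTorsionFree ℤ V]

/-- `hdiv` says that `(V ⧸ nV)^G = 0`, which kills the `n`-torsion of `H¹(G, V)` through the
long exact sequence of `0 → V → V → V ⧸ nV → 0`. -/
theorem H1_eq_zero_of_zsmul_eq_zero {ρ : Representation ℤ G V} {n : ℤ} (hn : n ≠ 0)
    (hdiv : ∀ v : V, (∀ g, ∃ w, ρ g v - v = n • w) → ∃ w, v = n • w)
    (x : groupCohomology (Rep.of ρ) 1) (hx : n • x = 0) : x = 0 := by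
  induction x using H1_induction_on with
  | h f =>
  rw [← map_zsmul, H1π_eq_zero_iff] at hx
  obtain ⟨v, hv⟩ := hx
  have hfv : ∀ g, ρ g v - v = n • f g := fun g => congrFun hv g
  obtain ⟨w, rfl⟩ := hdiv v fun g => ⟨f g, hfv g⟩
  refine (H1π_eq_zero_iff f).mpr ⟨w, funext fun g => ?_⟩
  apply smul_right_injective V hn
  change n • (ρ g w - w) = n • f g
  rw [← hfv g, map_zsmul, smul_sub]

end groupCohomology

theorem Pi.exists_eq_zsmul_iff_forall_dvd {ι : Type*} (n : ℤ) (v : ι → ℤ) :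
    (∃ w, v = n • w) ↔ ∀ i, n ∣ v i :=
  ⟨by rintro ⟨w, rfl⟩ i; exact dvd_mul_right n (w i),
    fun h => ⟨fun i => (h i).choose, funext fun i => (h i).choose_spec⟩⟩

theorem Prod.exists_eq_smul_iff {R α β : Type*} [SMul R α] [SMul R β] (n : R) (v : α × β) :
    (∃ w, v = n • w) ↔ (∃ w, v.1 = n • w) ∧ ∃ w, v.2 = n • w :=
  ⟨by rintro ⟨w, rfl⟩; exact ⟨⟨w.1, rfl⟩, ⟨w.2, rfl⟩⟩,
    by rintro ⟨⟨w₁, h₁⟩, ⟨w₂, h₂⟩⟩; exact ⟨(w₁, w₂), Prod.ext h₁ h₂⟩⟩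

namespace CongruenceSubgroup

def upperUnipotent (p : ℕ) : Gamma p :=
  ⟨⟨!![1, (p : ℤ); 0, 1], by simp [det_fin_two_of]⟩,
    Gamma_mem.mpr ⟨by simp, by simp, by simp, by simp⟩⟩

def lowerUnipotent (p : ℕ) : Gamma p :=
  ⟨⟨!![1, 0; (p : ℤ), 1], by simp [det_fin_two_of]⟩,
    Gamma_mem.mpr ⟨by simp, by simp, by simp, by simp⟩⟩

end CongruenceSubgroup

open MatrixGroups

section

variable {p : ℕ}

theorem repSum_apply (g : Gamma p) (v : (Fin 2 → ℤ) × (Fin 2 → ℤ)) :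
    repSum p g v = (((g : SL(2, ℤ)) : Matrix (Fin 2) (Fin 2) ℤ) *ᵥ v.1,
      (adjugate ((g : SL(2, ℤ)) : Matrix (Fin 2) (Fin 2) ℤ))ᵀ *ᵥ v.2) := by
  change (SpecialLinearGroup.toLin' g.1 v.1,
    SpecialLinearGroup.toLin' (g.1⁻¹).transpose v.2) = _
  rw [SpecialLinearGroup.toLin'_apply, SpecialLinearGroup.toLin'_apply, toLin'_apply,
    toLin'_apply]
  rfl

theorem repSum_upperUnipotent_sub (v : (Fin 2 → ℤ) × (Fin 2 → ℤ)) :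
    repSum p (upperUnipotent p) v - v = (![p * v.1 1, 0], ![0, -(p * v.2 0)]) := by
  rw [repSum_apply]
  ext i <;> fin_cases i <;>
    simp [upperUnipotent, adjugate_fin_two, dotProduct, Fin.sum_univ_two]

theorem repSum_lowerUnipotent_sub (v : (Fin 2 → ℤ) × (Fin 2 → ℤ)) :
    repSum p (lowerUnipotent p) v - v = (![0, p * v.1 0], ![-(p * v.2 1), 0]) := by
  rw [repSum_apply]
  ext i <;> fin_cases i <;>
    simp [lowerUnipotent, adjugate_fin_two, dotProduct, Fin.sum_univ_two]

end

theorem exists_eq_smul_of_forall_exists_repSum_sub_eq_smul {p q : ℕ} (hqp : q.Coprime p)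
    (v : (Fin 2 → ℤ) × (Fin 2 → ℤ)) (hv : ∀ g, ∃ w, repSum p g v - v = (q : ℤ) • w) :
    ∃ w, v = (q : ℤ) • w := by
  have hdvd (a : ℤ) (h : (q : ℤ) ∣ p * a) : (q : ℤ) ∣ a :=
    (Nat.isCoprime_iff_coprime.mpr hqp).dvd_of_dvd_mul_left h
  have hU := hv (upperUnipotent p)
  have hL := hv (lowerUnipotent p)
  simp only [repSum_upperUnipotent_sub, repSum_lowerUnipotent_sub, Prod.exists_eq_smul_iff,
    Pi.exists_eq_zsmul_iff_forall_dvd] at hU hL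
  simp only [Prod.exists_eq_smul_iff, Pi.exists_eq_zsmul_iff_forall_dvd, Fin.forall_fin_two]
  exact ⟨⟨hdvd _ (hL.1 1), hdvd _ (hU.1 0)⟩,
    ⟨hdvd _ (dvd_neg.mp (hU.2 1)), hdvd _ (dvd_neg.mp (hL.2 0))⟩⟩

theorem stmt7_general (p q : ℕ) (hp : p.Prime) (hq : q.Prime) (hqp : q ≠ p)
    (x : groupCohomology (Rep.of (repSum p)) 1) (hx : q • x = 0) : x = 0 :=
  groupCohomology.H1_eq_zero_of_zsmul_eq_zero (Int.natCast_ne_zero.mpr hq.ne_zero)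
    (exists_eq_smul_of_forall_exists_repSum_sub_eq_smul ((Nat.coprime_primes hq hp).mpr hqp)) x
    (by rwa [natCast_zsmul])

/-- for an odd prime `p` and a prime `q ≠ p`, the abelian group
`H¹(Γ₂(p); M ⊕ M*)` has no `q`-torsion. -/
theorem stmt7 (p q : ℕ) (hp : p.Prime) (hodd : Odd p) (hq : q.Prime) (hqp : q ≠ p)
    (x : groupCohomology (Rep.of (repSum p)) 1) (hx : q • x = 0) : x = 0 :=
  stmt7_general p q hp hq hqp x hx
end

section
/- Let p be an odd prime. The submodule of Γ₂(p)-invariants of (M ⊕ M*) ⊗ ℤ/p²ℤ (i.e. of (ℤ/p²ℤ)⁴ with Γ₂(p) acting through entrywise reduction mod p², by v ↦ A·v on the first two coordinates and v ↦ (Aᵀ)⁻¹·v on the last two) is isomorphic to (ℤ/pℤ)⁴. -/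
open Matrix CongruenceSubgroup

/-- `M ⊗ ℤ/p²ℤ`: the representation of `Γ₂(p)` on `(ℤ/p²ℤ)²` given by entrywise
reduction mod `p²` followed by matrix–vector multiplication `v ↦ A·v`. -/
noncomputable def repMmod (p : ℕ) : Representation (ZMod (p ^ 2)) (Gamma p) (Fin 2 → ZMod (p ^ 2)) :=
  (linEquivToEnd.comp Matrix.SpecialLinearGroup.toLin').comp
    ((Matrix.SpecialLinearGroup.map (Int.castRingHom (ZMod (p ^ 2)))).comp (Gamma p).subtype)

/-- `M* ⊗ ℤ/p²ℤ`: as above, with `A` acting by `v ↦ (Aᵀ)⁻¹·v`. -/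
noncomputable def repMdualMod (p : ℕ) : Representation (ZMod (p ^ 2)) (Gamma p) (Fin 2 → ZMod (p ^ 2)) :=
  ((linEquivToEnd.comp Matrix.SpecialLinearGroup.toLin').comp dualSL).comp
    ((Matrix.SpecialLinearGroup.map (Int.castRingHom (ZMod (p ^ 2)))).comp (Gamma p).subtype)

/-- `(M ⊕ M*) ⊗ ℤ/p²ℤ` as a representation of `Γ₂(p)`. -/
noncomputable def repSumMod (p : ℕ) :
    Representation (ZMod (p ^ 2)) (Gamma p)
      ((Fin 2 → ZMod (p ^ 2)) × (Fin 2 → ZMod (p ^ 2))) :=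
  ((LinearMap.prodMapRingHom (ZMod (p ^ 2)) _ _).toMonoidHom).comp
    (MonoidHom.prod (repMmod p) (repMdualMod p))

open scoped MatrixGroups

/-!
Reduced mod `p²`, every `g ∈ Γ(p)` becomes `1 + p • A`, and so does the matrix `(g⁻¹)ᵀ` by which
it acts on `M*`; hence every vector killed by `p` is invariant. Conversely, invariance under
`T ^ p = !![1, p; 0, 1]` and its transpose forces `p • v = 0` on both summands (on `M*`, the
inverse of either one acts by the other). So the invariants are the `p`-torsion of `(ℤ/p²ℤ)⁴`,
which is `(pℤ/p²ℤ)⁴ ≅ (ℤ/pℤ)⁴`.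
-/

section Torsion

variable {A B : Type*} [AddCommGroup A] [AddCommGroup B]

def AddEquiv.torsionByCongr (e : A ≃+ B) (n : ℤ) :
    AddSubgroup.torsionBy A n ≃+ AddSubgroup.torsionBy B n where
  toFun x := ⟨e x, by
    have hx : n • (x : A) = 0 := x.2
    simp [Submodule.mem_torsionBy_iff, ← map_zsmul, hx]⟩
  invFun y := ⟨e.symm y, by
    have hy : n • (y : B) = 0 := y.2
    simp [Submodule.mem_torsionBy_iff, ← map_zsmul, hy]⟩
  left_inv x := Subtype.ext (e.symm_apply_apply x)
  right_inv y := Subtype.ext (e.apply_symm_apply y)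
  map_add' x y := Subtype.ext (map_add e (x : A) y)

def AddSubgroup.piTorsionByAddEquiv (ι : Type*) (n : ℤ) :
    AddSubgroup.torsionBy (ι → A) n ≃+ (ι → AddSubgroup.torsionBy A n) where
  toFun x i := ⟨x.1 i, congr_fun x.2 i⟩
  invFun y := ⟨fun i => y i, funext fun i => (y i).2⟩
  left_inv _ := rfl
  right_inv _ := rfl
  map_add' _ _ := rfl

end Torsion

namespace ZMod

variable {p : ℕ}

lemma natCast_mul_intCast_eq_zero_iff (hp : p ≠ 0) (k : ℤ) :
    (p : ZMod (p ^ 2)) * k = 0 ↔ (p : ℤ) ∣ k := by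
  rw [← Int.cast_natCast, ← Int.cast_mul, intCast_zmod_eq_zero_iff_dvd, Nat.cast_pow, pow_two,
    mul_dvd_mul_iff_left (by exact_mod_cast hp)]

variable (p) in
def natMulHom : ZMod p →+ ZMod (p ^ 2) :=
  lift p ⟨(AddMonoidHom.mulLeft (p : ZMod (p ^ 2))).comp (Int.castAddHom _), by
    change (p : ZMod (p ^ 2)) * ((p : ℤ) : ZMod (p ^ 2)) = 0
    rw [Int.cast_natCast, ← sq, ← Nat.cast_pow, natCast_self]⟩

lemma natMulHom_intCast (k : ℤ) : natMulHom p k = p * k :=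
  lift_coe _ _ k

lemma natMulHom_injective (hp : p ≠ 0) : Function.Injective (natMulHom p) := by
  refine (injective_iff_map_eq_zero _).mpr fun a ha => ?_
  obtain ⟨k, rfl⟩ := intCast_surjective a
  rwa [natMulHom_intCast, natCast_mul_intCast_eq_zero_iff hp,
    ← intCast_zmod_eq_zero_iff_dvd] at ha

lemma range_natMulHom (hp : p ≠ 0) :
    (natMulHom p).range = AddSubgroup.torsionBy (ZMod (p ^ 2)) p := by
  ext y
  rw [AddMonoidHom.mem_range, Submodule.mem_toAddSubgroup, Submodule.mem_torsionBy_iff]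
  constructor
  · rintro ⟨a, rfl⟩
    rw [← map_zsmul, natCast_zsmul, nsmul_eq_mul, natCast_self, zero_mul, map_zero]
  · obtain ⟨k, rfl⟩ := intCast_surjective y
    rw [zsmul_eq_mul, Int.cast_natCast, natCast_mul_intCast_eq_zero_iff hp]
    rintro ⟨m, rfl⟩
    exact ⟨m, by rw [natMulHom_intCast]; push_cast; ring⟩

noncomputable def torsionBySqAddEquiv (hp : p ≠ 0) :
    AddSubgroup.torsionBy (ZMod (p ^ 2)) p ≃+ ZMod p :=
  ((AddMonoidHom.ofInjective (natMulHom_injective hp)).trans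
    (AddEquiv.addSubgroupCongr (range_natMulHom hp))).symm

end ZMod

namespace CongruenceSubgroup

lemma transpose_mem_Gamma {N : ℕ} {g : SL(2, ℤ)} (hg : g ∈ Gamma N) :
    g.transpose ∈ Gamma N := by
  simp only [Gamma_mem] at hg ⊢
  simp [SpecialLinearGroup.transpose, hg]

lemma T_zpow_mem_Gamma (N : ℕ) : ModularGroup.T ^ (N : ℤ) ∈ Gamma N := by
  simpa using ModularGroup_T_pow_mem_Gamma N N dvd_rfl

lemma exists_map_eq_one_add_nsmul_of_mem_Gamma {N : ℕ} {g : SL(2, ℤ)} (hg : g ∈ Gamma N)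
    (R : Type*) [CommRing R] :
    ∃ A : Matrix (Fin 2) (Fin 2) R, (g : Matrix (Fin 2) (Fin 2) ℤ).map Int.cast = 1 + N • A := by
  have hdvd (i j : Fin 2) :
      (N : ℤ) ∣ (g : Matrix (Fin 2) (Fin 2) ℤ) i j - (1 : Matrix (Fin 2) (Fin 2) ℤ) i j := by
    rw [← ZMod.intCast_zmod_eq_zero_iff_dvd, Int.cast_sub, sub_eq_zero]
    simpa [Matrix.one_apply, apply_ite] using
      congr_fun₂ (congrArg Subtype.val (Gamma_mem'.mp hg)) i j
  choose A hA using hdvd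
  have hg : (g : Matrix (Fin 2) (Fin 2) ℤ) = 1 + N • Matrix.of A := by
    ext i j
    simp [← hA]
  refine ⟨(Int.castRingHom R).mapMatrix (Matrix.of A), ?_⟩
  change (Int.castRingHom R).mapMatrix _ = _
  rw [hg, map_add, map_one, map_nsmul]

end CongruenceSubgroup

lemma ModularGroup.map_coe_T_zpow_natCast (R : Type*) [CommRing R] (N : ℕ) :
    ((T ^ (N : ℤ) : SL(2, ℤ)) : Matrix (Fin 2) (Fin 2) ℤ).map Int.cast =
      !![1, (N : R); 0, 1] := by
  rw [coe_T_zpow]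
  ext i j
  fin_cases i <;> fin_cases j <;> simp

namespace Matrix

variable {R : Type*} [CommRing R] {N : ℕ}

lemma one_add_nsmul_mulVec_of_nsmul_eq_zero {n : Type*} [Fintype n] [DecidableEq n]
    (A : Matrix n n R) {v : n → R} (hv : N • v = 0) : (1 + N • A) *ᵥ v = v := by
  rw [add_mulVec, one_mulVec, smul_mulVec, ← mulVec_smul, hv, mulVec_zero, add_zero]

lemma nsmul_eq_zero_of_mulVec_eq_self {v : Fin 2 → R} (hU : !![1, (N : R); 0, 1] *ᵥ v = v)
    (hL : !![1, (N : R); 0, 1]ᵀ *ᵥ v = v) : N • v = 0 := by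
  have h₁ : (N : R) * v 1 = 0 := by simpa [mulVec, dotProduct] using congr_fun hU 0
  have h₀ : (N : R) * v 0 = 0 := by simpa [mulVec, dotProduct] using congr_fun hL 1
  ext i
  fin_cases i <;> simp [h₀, h₁]

end Matrix

section Invariants

variable {p : ℕ}

lemma repSumMod_apply_fst (g : Gamma p)
    (x : (Fin 2 → ZMod (p ^ 2)) × (Fin 2 → ZMod (p ^ 2))) :
    (repSumMod p g x).1 = (g : Matrix (Fin 2) (Fin 2) ℤ).map Int.cast *ᵥ x.1 :=
  rfl

lemma repSumMod_inv_apply_snd (g : Gamma p)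
    (x : (Fin 2 → ZMod (p ^ 2)) × (Fin 2 → ZMod (p ^ 2))) :
    (repSumMod p g⁻¹ x).2 = ((g : Matrix (Fin 2) (Fin 2) ℤ).map Int.cast)ᵀ *ᵥ x.2 := by
  change (((SpecialLinearGroup.map (Int.castRingHom _) ((g⁻¹ : Gamma p) : SL(2, ℤ)))⁻¹ :
    SL(2, ZMod (p ^ 2))) : Matrix (Fin 2) (Fin 2) _)ᵀ *ᵥ x.2 = _
  rw [← map_inv, Subgroup.coe_inv, inv_inv]
  rfl

lemma mem_invariants_repSumMod_iff (x : (Fin 2 → ZMod (p ^ 2)) × (Fin 2 → ZMod (p ^ 2))) :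
    x ∈ (repSumMod p).invariants ↔ p • x = 0 := by
  rw [Representation.mem_invariants]
  constructor
  · intro hx
    have hfix (g : Gamma p) : (g : Matrix (Fin 2) (Fin 2) ℤ).map Int.cast *ᵥ x.1 = x.1 ∧
        ((g : Matrix (Fin 2) (Fin 2) ℤ).map Int.cast)ᵀ *ᵥ x.2 = x.2 :=
      ⟨by rw [← repSumMod_apply_fst, hx], by rw [← repSumMod_inv_apply_snd, hx]⟩
    obtain ⟨h₁, h₂⟩ := hfix ⟨_, T_zpow_mem_Gamma p⟩
    obtain ⟨h₃, h₄⟩ := hfix ⟨_, transpose_mem_Gamma (T_zpow_mem_Gamma p)⟩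
    simp only [SpecialLinearGroup.coe_transpose, transpose_map,
      ModularGroup.map_coe_T_zpow_natCast, transpose_transpose] at h₁ h₂ h₃ h₄
    exact Prod.ext (nsmul_eq_zero_of_mulVec_eq_self h₁ h₃)
      (nsmul_eq_zero_of_mulVec_eq_self h₄ h₂)
  · intro hx g
    obtain ⟨A, hA⟩ := exists_map_eq_one_add_nsmul_of_mem_Gamma g.2 (ZMod (p ^ 2))
    obtain ⟨B, hB⟩ := exists_map_eq_one_add_nsmul_of_mem_Gamma g⁻¹.2 (ZMod (p ^ 2))
    refine Prod.ext ?_ ?_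
    · rw [repSumMod_apply_fst, hA, one_add_nsmul_mulVec_of_nsmul_eq_zero _ (congrArg Prod.fst hx)]
    · rw [← inv_inv g, repSumMod_inv_apply_snd, hB, transpose_add, transpose_one, transpose_smul,
        one_add_nsmul_mulVec_of_nsmul_eq_zero _ (congrArg Prod.snd hx)]

variable (p) in
lemma invariants_repSumMod_eq_torsionBy :
    (repSumMod p).invariants.toAddSubgroup = AddSubgroup.torsionBy _ p := by
  ext x
  rw [Submodule.mem_toAddSubgroup, mem_invariants_repSumMod_iff, AddSubgroup.torsionBy.nsmul_iff]

end Invariants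

theorem stmt8_general (p : ℕ) (hp : p.Prime) :
    Nonempty ((repSumMod p).invariants ≃+ (Fin 4 → ZMod p)) := by
  let e : ((Fin 2 → ZMod (p ^ 2)) × (Fin 2 → ZMod (p ^ 2))) ≃+ (Fin 4 → ZMod (p ^ 2)) :=
    ((LinearEquiv.sumArrowLequivProdArrow (Fin 2) (Fin 2) (ZMod (p ^ 2)) (ZMod (p ^ 2))).symm.trans
      (LinearEquiv.funCongrLeft _ _ finSumFinEquiv.symm)).toAddEquiv
  exact ⟨(AddEquiv.addSubgroupCongr (invariants_repSumMod_eq_torsionBy p)).trans <|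
    (e.torsionByCongr p).trans <| (AddSubgroup.piTorsionByAddEquiv _ _).trans <|
      AddEquiv.piCongrRight fun _ => ZMod.torsionBySqAddEquiv hp.ne_zero⟩

/-- for an odd prime `p`, the submodule of `Γ₂(p)`-invariants of
`(M ⊕ M*) ⊗ ℤ/p²ℤ` is isomorphic to `(ℤ/pℤ)⁴`. -/
theorem stmt8 (p : ℕ) (hp : p.Prime) (hodd : Odd p) :
    Nonempty ((repSumMod p).invariants ≃+ (Fin 4 → ZMod p)) :=
  stmt8_general p hp
end

section
/- Let p be an odd prime and let G₀(p) ≤ SL₄(ℤ) be the group of 4×4 integer matrices of the form [[1, x, y, z],[0, 1, w, y−xw],[0, 0, 1, −x],[0, 0, 0, 1]] with x, y, z, w integers divisible by p. Then G₀(p) is isomorphic to a semidirect product ℤ³ ⋊ ℤ in which the generator of ℤ acts on ℤ³ by the matrix [[1, 2p, p²],[0, 1, p],[0, 0, 1]]. -/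
/-- `SL₄(ℤ)`. -/
abbrev SL4 : Type := Matrix.SpecialLinearGroup (Fin 4) ℤ

/-- The matrix `[[1, 2p, p²],[0, 1, p],[0, 0, 1]]`. -/
def Tmat (p : ℕ) : Matrix (Fin 3) (Fin 3) ℤ :=
  !![1, 2 * (p : ℤ), (p : ℤ) ^ 2; 0, 1, (p : ℤ); 0, 0, 1]

/-- The inverse of `Tmat p`. -/
def TmatInv (p : ℕ) : Matrix (Fin 3) (Fin 3) ℤ :=
  !![1, -(2 * (p : ℤ)), (p : ℤ) ^ 2; 0, 1, -(p : ℤ); 0, 0, 1]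

lemma TmatInv_mul (p : ℕ) (v : Fin 3 → ℤ) :
    (TmatInv p).mulVec ((Tmat p).mulVec v) = v := by
  rw [Matrix.mulVec_mulVec]
  have h : TmatInv p * Tmat p = 1 := by
    ext i j
    fin_cases i <;> fin_cases j <;>
      simp [TmatInv, Tmat, Matrix.mul_apply, Fin.sum_univ_three, Matrix.one_apply, Matrix.vecHead, Matrix.vecTail] <;> ring
  rw [h, Matrix.one_mulVec]

lemma Tmat_mul (p : ℕ) (v : Fin 3 → ℤ) :
    (Tmat p).mulVec ((TmatInv p).mulVec v) = v := by
  rw [Matrix.mulVec_mulVec]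
  have h : Tmat p * TmatInv p = 1 := by
    ext i j
    fin_cases i <;> fin_cases j <;>
      simp [TmatInv, Tmat, Matrix.mul_apply, Fin.sum_univ_three, Matrix.one_apply, Matrix.vecHead, Matrix.vecTail] <;> ring
  rw [h, Matrix.one_mulVec]

/-- The automorphism of `ℤ³` given by the matrix `[[1, 2p, p²],[0, 1, p],[0, 0, 1]]`. -/
def Taut (p : ℕ) : MulAut (Multiplicative (Fin 3 → ℤ)) :=
  AddEquiv.toMultiplicative
    { toFun := (Tmat p).mulVec
      invFun := (TmatInv p).mulVec
      left_inv := TmatInv_mul p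
      right_inv := Tmat_mul p
      map_add' := fun v w => Matrix.mulVec_add _ v w }

/-- The action of `ℤ` on `ℤ³` in which the generator `1` acts by the matrix
`[[1, 2p, p²],[0, 1, p],[0, 0, 1]]`. -/
def Tact (p : ℕ) : Multiplicative ℤ →* MulAut (Multiplicative (Fin 3 → ℤ)) :=
  zpowersHom _ (Taut p)

/-- `Tmat p` to the `k`-th power, `k : ℤ`. -/
def TmatZ (p : ℕ) (k : ℤ) : Matrix (Fin 3) (Fin 3) ℤ :=
  !![1, 2 * (p : ℤ) * k, (p : ℤ) ^ 2 * k ^ 2; 0, 1, (p : ℤ) * k; 0, 0, 1]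

lemma taut_apply (p : ℕ) (m : Multiplicative (Fin 3 → ℤ)) :
    Multiplicative.toAdd (Taut p m) = (Tmat p).mulVec (Multiplicative.toAdd m) := rfl

lemma taut_inv_apply (p : ℕ) (m : Multiplicative (Fin 3 → ℤ)) :
    Multiplicative.toAdd ((Taut p)⁻¹ m) = (TmatInv p).mulVec (Multiplicative.toAdd m) := rfl

lemma taut_zpow (p : ℕ) (k : ℤ) (m : Multiplicative (Fin 3 → ℤ)) :
    Multiplicative.toAdd (((Taut p) ^ k) m) = (TmatZ p k).mulVec (Multiplicative.toAdd m) := by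
  induction k using Int.induction_on with
  | zero =>
      simp only [zpow_zero, MulAut.one_apply]
      funext i
      fin_cases i <;>
        simp [TmatZ, Matrix.mulVec, dotProduct, Fin.sum_univ_three, Matrix.vecHead, Matrix.vecTail]
  | succ k ih =>
      have h1 : ((Taut p) ^ ((k : ℤ) + 1)) m = Taut p (((Taut p) ^ (k : ℤ)) m) := by
        rw [show (k : ℤ) + 1 = 1 + k by ring, zpow_add, zpow_one, MulAut.mul_apply]
      rw [h1, taut_apply, ih]
      funext i
      fin_cases i <;>
        simp [Tmat, TmatZ, Matrix.mulVec, dotProduct, Fin.sum_univ_three, Matrix.vecHead, Matrix.vecTail] <;> ring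
  | pred k ih =>
      have h1 : ((Taut p) ^ (-(k : ℤ) - 1)) m = (Taut p)⁻¹ (((Taut p) ^ (-(k : ℤ))) m) := by
        rw [show -(k : ℤ) - 1 = -1 + -k by ring, zpow_add, zpow_neg_one, MulAut.mul_apply]
      rw [h1, taut_inv_apply, ih]
      funext i
      fin_cases i <;>
        simp [TmatInv, TmatZ, Matrix.mulVec, dotProduct, Fin.sum_univ_three, Matrix.vecHead, Matrix.vecTail] <;> ring

/-- The matrix corresponding to the pair `(v, k)`. -/
def gmat (p : ℕ) (v : Fin 3 → ℤ) (k : ℤ) : Matrix (Fin 4) (Fin 4) ℤ :=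
  !![1, k * (p : ℤ), (p : ℤ) * v 1, (p : ℤ) * v 0 - k * (p : ℤ) ^ 2 * v 1;
     0, 1, (p : ℤ) * v 2, (p : ℤ) * v 1 - k * (p : ℤ) ^ 2 * v 2;
     0, 0, 1, -(k * (p : ℤ));
     0, 0, 0, 1]

lemma gmat_det (p : ℕ) (v : Fin 3 → ℤ) (k : ℤ) : (gmat p v k).det = 1 := by
  simp [gmat, Matrix.det_succ_row_zero, Fin.sum_univ_succ, Matrix.det_fin_three,
    Matrix.vecHead, Matrix.vecTail]

lemma gmat_mul (p : ℕ) (v v' : Fin 3 → ℤ) (k k' : ℤ) :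
    gmat p v k * gmat p v' k' = gmat p (v + (TmatZ p k).mulVec v') (k + k') := by
  ext i j
  fin_cases i <;> fin_cases j <;>
    simp [gmat, TmatZ, Matrix.mul_apply, Matrix.mulVec, dotProduct,
      Fin.sum_univ_four, Fin.sum_univ_three, Matrix.vecHead, Matrix.vecTail] <;> ring

/-- The element of `SL₄(ℤ)` corresponding to the pair `(v, k)`. -/
def gsl (p : ℕ) (v : Fin 3 → ℤ) (k : ℤ) : SL4 := ⟨gmat p v k, gmat_det p v k⟩

/-- for an odd prime `p`, the group `G₀(p)` of matrices
`[[1,x,y,z],[0,1,w,y−xw],[0,0,1,−x],[0,0,0,1]]` in `SL₄(ℤ)` with `p ∣ x,y,z,w`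
is isomorphic to the semidirect product `ℤ³ ⋊ ℤ` in which the generator of `ℤ`
acts on `ℤ³` by the matrix `[[1, 2p, p²],[0, 1, p],[0, 0, 1]]`. -/
theorem stmt15 (p : ℕ) (hp : p.Prime) (hodd : Odd p)
    (G : Subgroup SL4)
    (hG : ∀ A : SL4, A ∈ G ↔
      ∃ x y z w : ℤ, (p : ℤ) ∣ x ∧ (p : ℤ) ∣ y ∧ (p : ℤ) ∣ z ∧ (p : ℤ) ∣ w ∧
        A.1 = !![1, x, y, z;
                 0, 1, w, y - x * w;
                 0, 0, 1, -x;
                 0, 0, 0, 1]) :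
    Nonempty (G ≃*
      SemidirectProduct (Multiplicative (Fin 3 → ℤ)) (Multiplicative ℤ) (Tact p)) := by
  have hp0 : (p : ℤ) ≠ 0 := by exact_mod_cast hp.ne_zero
  have hmem : ∀ (v : Fin 3 → ℤ) (k : ℤ), gsl p v k ∈ G := by
    intro v k
    rw [hG]
    refine ⟨k * p, p * v 1, p * v 0 - k * (p:ℤ)^2 * v 1, p * v 2,
      ⟨k, mul_comm _ _⟩, ⟨v 1, rfl⟩, ⟨v 0 - k * p * v 1, by ring⟩, ⟨v 2, rfl⟩, ?_⟩
    show gmat p v k = _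
    ext i j
    fin_cases i <;> fin_cases j <;>
      simp [gmat, Matrix.vecHead, Matrix.vecTail] <;> ring
  let φ : SemidirectProduct (Multiplicative (Fin 3 → ℤ)) (Multiplicative ℤ) (Tact p) →* G :=
    MonoidHom.mk'
      (fun g => ⟨gsl p (Multiplicative.toAdd g.left) (Multiplicative.toAdd g.right), hmem _ _⟩)
      (by
        intro a b
        apply Subtype.ext
        apply Subtype.ext
        show gmat p (Multiplicative.toAdd (a * b).left) (Multiplicative.toAdd (a * b).right)
          = gmat p (Multiplicative.toAdd a.left) (Multiplicative.toAdd a.right)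
            * gmat p (Multiplicative.toAdd b.left) (Multiplicative.toAdd b.right)
        rw [gmat_mul]
        have hr : Multiplicative.toAdd (a * b).right
            = Multiplicative.toAdd a.right + Multiplicative.toAdd b.right := by
          show Multiplicative.toAdd (a.right * b.right) = _
          rw [toAdd_mul]
        have hl : Multiplicative.toAdd (a * b).left
            = Multiplicative.toAdd a.left
              + (TmatZ p (Multiplicative.toAdd a.right)).mulVec (Multiplicative.toAdd b.left) := by
          show Multiplicative.toAdd (a.left * Tact p a.right b.left) = _
          rw [toAdd_mul]
          congr 1
          show Multiplicative.toAdd ((Taut p ^ Multiplicative.toAdd a.right) b.left) = _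
          rw [taut_zpow]
        rw [hl, hr])
  have hinj : Function.Injective φ := by
    intro a b h
    have hM : gmat p (Multiplicative.toAdd a.left) (Multiplicative.toAdd a.right)
        = gmat p (Multiplicative.toAdd b.left) (Multiplicative.toAdd b.right) :=
      congrArg (fun g : G => ((g : SL4) : Matrix (Fin 4) (Fin 4) ℤ)) h
    set va := Multiplicative.toAdd a.left with hva
    set vb := Multiplicative.toAdd b.left with hvb
    set ka := Multiplicative.toAdd a.right with hka
    set kb := Multiplicative.toAdd b.right with hkb
    have e01 : ka * p = kb * p := by
      have := congrFun (congrFun hM 0) 1; simpa [gmat] using this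
    have hk : ka = kb := mul_right_cancel₀ hp0 e01
    have e1 : va 1 = vb 1 := by
      have := congrFun (congrFun hM 0) 2; simp [gmat, hp.ne_zero] at this
      exact this
    have e2 : va 2 = vb 2 := by
      have := congrFun (congrFun hM 1) 2; simp [gmat, hp.ne_zero] at this
      exact this
    have e0 : va 0 = vb 0 := by
      have := congrFun (congrFun hM 0) 3; simp [gmat] at this
      rw [hk, e1] at this
      have h2 : (p:ℤ) * va 0 = p * vb 0 := by linarith
      exact mul_left_cancel₀ hp0 h2
    have hv : va = vb := by
      funext i; fin_cases i <;> assumption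
    ext
    · exact congrFun hv _
    · exact congrArg Multiplicative.ofAdd hk
  have hsurj : Function.Surjective φ := by
    rintro ⟨A, hA⟩
    rw [hG] at hA
    obtain ⟨x, y, z, w, ⟨k, hk⟩, ⟨b, hb⟩, ⟨c, hc⟩, ⟨d, hd⟩, hM⟩ := hA
    refine ⟨⟨Multiplicative.ofAdd ![c + p * k * b, b, d], Multiplicative.ofAdd k⟩, ?_⟩
    apply Subtype.ext
    apply Subtype.ext
    show gmat p ![c + p * k * b, b, d] k = A.1
    rw [hM]
    ext i j
    fin_cases i <;> fin_cases j <;>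
      simp [gmat, hk, hb, hc, hd, Matrix.vecHead, Matrix.vecTail] <;> ring
  exact ⟨(MulEquiv.ofBijective φ ⟨hinj, hsurj⟩).symm⟩
end

section
/- Let P₁ = { A ∈ SL₃(ℤ) : A₂₁ = A₃₁ = 0 }, P₂ = { A ∈ SL₃(ℤ) : A₃₁ = A₃₂ = 0 }, and B = P₁ ∩ P₂ (the upper triangular subgroup). Then the group homomorphism from the amalgamated free product P₁ ∗_B P₂ (the pushout of the inclusions B ↪ P₁ and B ↪ P₂) to SL₃(ℤ) induced by the inclusions P₁ ↪ SL₃(ℤ) and P₂ ↪ SL₃(ℤ) is surjective. -/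
open Monoid

/-- `SL₃(ℤ)`. -/
abbrev SL3 : Type := Matrix.SpecialLinearGroup (Fin 3) ℤ

/-- The two-element family of groups `P₁`, `P₂` (indexed by `Bool`). -/
def Gfam (P₁ P₂ : Subgroup SL3) : Bool → Type
  | true => ↥P₁
  | false => ↥P₂

instance (P₁ P₂ : Subgroup SL3) (b : Bool) : Group (Gfam P₁ P₂ b) :=
  match b with
  | true => inferInstanceAs (Group ↥P₁)
  | false => inferInstanceAs (Group ↥P₂)

/-- The inclusions `B = P₁ ⊓ P₂ ↪ P₁, P₂`. -/
def famInc (P₁ P₂ : Subgroup SL3) : ∀ b : Bool, ↥(P₁ ⊓ P₂) →* Gfam P₁ P₂ b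
  | true => Subgroup.inclusion inf_le_left
  | false => Subgroup.inclusion inf_le_right

/-- The inclusions `P₁, P₂ ↪ SL₃(ℤ)`. -/
def famSub (P₁ P₂ : Subgroup SL3) : ∀ b : Bool, Gfam P₁ P₂ b →* SL3
  | true => P₁.subtype
  | false => P₂.subtype

lemma famComp (P₁ P₂ : Subgroup SL3) :
    ∀ b : Bool, (famSub P₁ P₂ b).comp (famInc P₁ P₂ b) = (P₁ ⊓ P₂).subtype
  | true => rfl
  | false => rfl

/-- The canonical homomorphism `P₁ ∗_B P₂ → SL₃(ℤ)` from the amalgamated free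
product (the pushout of the inclusions `B ↪ P₁`, `B ↪ P₂`), induced by the
inclusions `P₁ ↪ SL₃(ℤ)` and `P₂ ↪ SL₃(ℤ)`. -/
def amalgHom (P₁ P₂ : Subgroup SL3) : Monoid.PushoutI (famInc P₁ P₂) →* SL3 :=
  Monoid.PushoutI.lift (famSub P₁ P₂) (P₁ ⊓ P₂).subtype (famComp P₁ P₂)


lemma bezout (x y : ℤ) : ∃ a b c d : ℤ, a*d - b*c = 1 ∧ c*x + d*y = 0 := by
  rcases eq_or_ne (Int.gcd x y) 0 with h | h
  · obtain ⟨hx, hy⟩ := Int.gcd_eq_zero_iff.mp h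
    exact ⟨1, 0, 0, 1, by ring, by simp [hx, hy]⟩
  · set g : ℤ := (Int.gcd x y : ℤ) with hgdef
    have hg : g ≠ 0 := by simpa [hgdef] using h
    obtain ⟨x', hx'⟩ : g ∣ x := Int.gcd_dvd_left x y
    obtain ⟨y', hy'⟩ : g ∣ y := Int.gcd_dvd_right x y
    have hb : g = x * Int.gcdA x y + y * Int.gcdB x y := Int.gcd_eq_gcd_ab x y
    refine ⟨Int.gcdA x y, Int.gcdB x y, -y', x', ?_, by rw [hx', hy']; ring⟩
    have h2 : g * (x' * Int.gcdA x y + y' * Int.gcdB x y) = g * 1 := by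
      rw [mul_one]; nth_rewrite 2 [hb]; rw [hx', hy']; ring
    have := mul_left_cancel₀ hg h2
    linarith

def mkU (a b c d : ℤ) (h : a*d - b*c = 1) : SL3 :=
  ⟨!![1,0,0;0,a,b;0,c,d], by simp [Matrix.det_fin_three]; linear_combination h⟩

def mkV (a b c d : ℤ) (h : a*d - b*c = 1) : SL3 :=
  ⟨!![a,b,0;c,d,0;0,0,1], by simp [Matrix.det_fin_three]; linear_combination h⟩

/-- with `P₁ = {A ∈ SL₃(ℤ) : A₂₁ = A₃₁ = 0}`,
`P₂ = {A ∈ SL₃(ℤ) : A₃₁ = A₃₂ = 0}` and `B = P₁ ∩ P₂`, the homomorphism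
`P₁ ∗_B P₂ → SL₃(ℤ)` induced by the inclusions is surjective. -/
theorem stmt18 (P₁ P₂ : Subgroup SL3)
    (hP₁ : ∀ A : SL3, A ∈ P₁ ↔ (A.1 1 0 = 0 ∧ A.1 2 0 = 0))
    (hP₂ : ∀ A : SL3, A ∈ P₂ ↔ (A.1 2 0 = 0 ∧ A.1 2 1 = 0)) :
    Function.Surjective (amalgHom P₁ P₂) := by
  intro A
  -- Step 1: clear the (3,1) entry with an element of P₁
  obtain ⟨a, b, c, d, h1, h2⟩ := bezout (A.1 1 0) (A.1 2 0)
  set u : SL3 := mkU a b c d h1 with hu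
  have hu1 : u ∈ P₁ := by rw [hP₁]; exact ⟨rfl, rfl⟩
  have e1 : (u * A).1 2 0 = 0 := by
    simp only [Matrix.SpecialLinearGroup.coe_mul]
    rw [Matrix.mul_apply, Fin.sum_univ_three]
    simp [hu, mkU]
    linear_combination h2
  -- Step 2: clear the (2,1) entry with an element of P₂
  obtain ⟨a', b', c', d', h1', h2'⟩ := bezout ((u * A).1 0 0) ((u * A).1 1 0)
  set v : SL3 := mkV a' b' c' d' h1' with hv
  have hv2 : v ∈ P₂ := by rw [hP₂]; exact ⟨rfl, rfl⟩
  have e2 : (v * (u * A)).1 1 0 = 0 := by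
    simp only [Matrix.SpecialLinearGroup.coe_mul]
    rw [Matrix.mul_apply, Fin.sum_univ_three]
    simp [hv, mkV]
    linear_combination h2'
  have e3 : (v * (u * A)).1 2 0 = 0 := by
    simp only [Matrix.SpecialLinearGroup.coe_mul]
    rw [Matrix.mul_apply, Fin.sum_univ_three]
    simp [hv, mkV]
    linear_combination e1
  set w : SL3 := v * (u * A) with hw
  have hw1 : w ∈ P₁ := (hP₁ w).mpr ⟨e2, e3⟩
  -- Assemble the preimage
  refine ⟨PushoutI.of (φ := famInc P₁ P₂) true ⟨u⁻¹, inv_mem hu1⟩ *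
      (PushoutI.of (φ := famInc P₁ P₂) false ⟨v⁻¹, inv_mem hv2⟩ *
       PushoutI.of (φ := famInc P₁ P₂) true ⟨w, hw1⟩), ?_⟩
  simp only [map_mul, amalgHom]
  erw [PushoutI.lift_of, PushoutI.lift_of, PushoutI.lift_of]
  show (P₁.subtype _) * ((P₂.subtype _) * (P₁.subtype _)) = A
  simp only [Subgroup.coe_subtype]
  show u⁻¹ * (v⁻¹ * w) = A
  rw [hw]; group
end

section
/- Let P₁ = { A ∈ SL₃(ℤ) : A₂₁ = A₃₁ = 0 }, P₂ = { A ∈ SL₃(ℤ) : A₃₁ = A₃₂ = 0 }, and B = P₁ ∩ P₂, and let φ : P₁ ∗_B P₂ → SL₃(ℤ) be the homomorphism from the amalgamated free product induced by the inclusions. Then the kernel of φ is a free group, and it is not finitely generated. -/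
open Monoid

namespace S19

/-- The "Heisenberg" lower-triangular unipotent matrices. -/
def M (a c e : ℤ) : SL3 :=
  ⟨!![1,0,0; a,1,0; c,e,1], by simp [Matrix.det_fin_three]⟩

lemma M_mul (a c e a' c' e' : ℤ) : M a c e * M a' c' e' = M (a+a') (c+c'+e*a') (e+e') := by
  ext i j
  rw [Matrix.SpecialLinearGroup.coe_mul]
  simp only [M, Matrix.SpecialLinearGroup.coe_mul]
  fin_cases i <;> fin_cases j <;>
    simp [Matrix.mul_apply, Fin.sum_univ_succ] <;> ring

lemma M_one : M 0 0 0 = 1 := by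
  ext i j
  fin_cases i <;> fin_cases j <;>
    simp [M, Matrix.one_apply, Matrix.vecHead, Matrix.vecTail]

lemma M_inv (a c e : ℤ) : (M a c e)⁻¹ = M (-a) (e*a-c) (-e) := by
  apply inv_eq_of_mul_eq_one_right
  rw [M_mul, show a + -a = 0 by ring, show c + (e*a-c) + e*(-a) = 0 by ring,
    show e + -e = 0 by ring, M_one]

lemma M_inj {a c e a' c' e' : ℤ} (h : M a c e = M a' c' e') : a = a' ∧ c = c' ∧ e = e' := by
  have h1 := congrArg (fun m => m.1 1 0) h
  have h2 := congrArg (fun m => m.1 2 0) h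
  have h3 := congrArg (fun m => m.1 2 1) h
  simp [M] at h1 h2 h3
  exact ⟨h1, h2, h3⟩

section Setup

structure Setup : Type where
  P₁ : Subgroup SL3
  P₂ : Subgroup SL3
  hP₁ : ∀ A : SL3, A ∈ P₁ ↔ (A.1 1 0 = 0 ∧ A.1 2 0 = 0)
  hP₂ : ∀ A : SL3, A ∈ P₂ ↔ (A.1 2 0 = 0 ∧ A.1 2 1 = 0)

variable (S : Setup)

lemma M_mem₁ (a c e : ℤ) : M a c e ∈ S.P₁ ↔ (a = 0 ∧ c = 0) := by
  rw [S.hP₁]; constructor <;> intro h <;> simpa [M] using h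

lemma M_mem₂ (a c e : ℤ) : M a c e ∈ S.P₂ ↔ (c = 0 ∧ e = 0) := by
  rw [S.hP₂]; constructor <;> intro h <;> simpa [M] using h

lemma M_memB (a c e : ℤ) : M a c e ∈ S.P₁ ⊓ S.P₂ ↔ (a = 0 ∧ c = 0 ∧ e = 0) := by
  rw [Subgroup.mem_inf, M_mem₁, M_mem₂]; tauto

abbrev Setup.G : Type := Monoid.PushoutI (famInc S.P₁ S.P₂)

abbrev Setup.φ : S.G →* SL3 := amalgHom S.P₁ S.P₂

abbrev Setup.R : Subgroup SL3 := S.φ.range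

abbrev Setup.RT : Type := ↥S.R

/-- inclusion of `P₁` into the pushout. -/
def Setup.o₁ : ↥S.P₁ →* S.G := Monoid.PushoutI.of (φ := famInc S.P₁ S.P₂) true

def Setup.o₂ : ↥S.P₂ →* S.G := Monoid.PushoutI.of (φ := famInc S.P₁ S.P₂) false

@[simp] lemma φ_o₁ (p : ↥S.P₁) : S.φ (S.o₁ p) = p.val := by
  simp [Setup.o₁, Setup.φ, amalgHom]
  rfl

@[simp] lemma φ_o₂ (p : ↥S.P₂) : S.φ (S.o₂ p) = p.val := by
  simp [Setup.o₂, Setup.φ, amalgHom]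
  rfl

noncomputable instance : MulAction S.G S.RT where
  smul g r := ⟨S.φ g, ⟨g, rfl⟩⟩ * r
  one_smul r := by
    show (⟨_,_⟩ * r : S.RT) = r
    ext
    simp
  mul_smul g h r := by
    show (⟨_,_⟩ * r : S.RT) = (⟨_,_⟩ * (⟨_,_⟩ * r) : S.RT)
    ext
    simp [mul_assoc]

lemma smul_def (g : S.G) (r : S.RT) : g • r = ⟨S.φ g, ⟨g, rfl⟩⟩ * r := rfl

@[simp] lemma smul_val (g : S.G) (r : S.RT) : (g • r).val = S.φ g * r.val := rfl

end Setup

end S19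

namespace S19
section Cocycle

variable (S : Setup) {X : Type} [Group X]

abbrev Setup.W (S : Setup) (X : Type) [Group X] : Type := (S.RT → X) ⋊[mulAutArrow] S.G

lemma mulAutArrow_apply (g : S.G) (f : S.RT → X) (a : S.RT) :
    (mulAutArrow g f) a = f (g⁻¹ • a) := rfl

variable (d₁ d₂ : S.RT → X)

/-- the cocycle homomorphism on `P₁`. -/
noncomputable def Setup.hc₁ : ↥S.P₁ →* S.W X where
  toFun p := ⟨fun r => d₁ r * (d₁ ((S.o₁ p)⁻¹ • r))⁻¹, S.o₁ p⟩
  map_one' := by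
    ext r
    · simp
    · simp
  map_mul' p q := by
    ext r
    · show d₁ r * (d₁ ((S.o₁ (p*q))⁻¹ • r))⁻¹ =
        (d₁ r * (d₁ ((S.o₁ p)⁻¹ • r))⁻¹) *
          (d₁ ((S.o₁ p)⁻¹ • r) * (d₁ ((S.o₁ q)⁻¹ • ((S.o₁ p)⁻¹ • r)))⁻¹)
      rw [map_mul, mul_inv_rev, mul_smul]
      group
    · show S.o₁ (p * q) = S.o₁ p * S.o₁ q
      simp

noncomputable def Setup.hc₂ : ↥S.P₂ →* S.W X where
  toFun p := ⟨fun r => d₂ r * (d₂ ((S.o₂ p)⁻¹ • r))⁻¹, S.o₂ p⟩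
  map_one' := by
    ext r
    · simp
    · simp
  map_mul' p q := by
    ext r
    · show d₂ r * (d₂ ((S.o₂ (p*q))⁻¹ • r))⁻¹ =
        (d₂ r * (d₂ ((S.o₂ p)⁻¹ • r))⁻¹) *
          (d₂ ((S.o₂ p)⁻¹ • r) * (d₂ ((S.o₂ q)⁻¹ • ((S.o₂ p)⁻¹ • r)))⁻¹)
      rw [map_mul, mul_inv_rev, mul_smul]
      group
    · show S.o₂ (p * q) = S.o₂ p * S.o₂ q
      simp

variable (hd : ∀ r p : S.RT, (r * p⁻¹).val ∈ S.P₁ ⊓ S.P₂ → d₁ r * (d₁ p)⁻¹ = d₂ r * (d₂ p)⁻¹)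

lemma o₁_base (h : ↥(S.P₁ ⊓ S.P₂)) :
    S.o₁ (famInc S.P₁ S.P₂ true h) = Monoid.PushoutI.base (famInc S.P₁ S.P₂) h :=
  Monoid.PushoutI.of_apply_eq_base (φ := famInc S.P₁ S.P₂) true h

lemma o₂_base (h : ↥(S.P₁ ⊓ S.P₂)) :
    S.o₂ (famInc S.P₁ S.P₂ false h) = Monoid.PushoutI.base (famInc S.P₁ S.P₂) h :=
  Monoid.PushoutI.of_apply_eq_base (φ := famInc S.P₁ S.P₂) false h

@[simp] lemma φ_base (S : Setup) (h : ↥(S.P₁ ⊓ S.P₂)) :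
    S.φ (Monoid.PushoutI.base (famInc S.P₁ S.P₂) h) = h.val :=
  Monoid.PushoutI.lift_base _ _ _ _

lemma base_smul_val (S : Setup) (h : ↥(S.P₁ ⊓ S.P₂)) (r : S.RT) :
    ((Monoid.PushoutI.base (famInc S.P₁ S.P₂) h)⁻¹ • r).val = (h.val)⁻¹ * r.val := by
  rw [smul_val, map_inv, φ_base]

include hd in
lemma hc_comp_eq :
    (S.hc₁ d₁).comp (famInc S.P₁ S.P₂ true) = (S.hc₂ d₂).comp (famInc S.P₁ S.P₂ false) := by
  apply MonoidHom.ext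
  intro h
  apply SemidirectProduct.ext
  · funext r
    show d₁ r * (d₁ ((S.o₁ (famInc S.P₁ S.P₂ true h))⁻¹ • r))⁻¹ =
      d₂ r * (d₂ ((S.o₂ (famInc S.P₁ S.P₂ false h))⁻¹ • r))⁻¹
    rw [o₁_base, o₂_base]
    apply hd
    rw [show (r * ((Monoid.PushoutI.base (famInc S.P₁ S.P₂) h)⁻¹ • r)⁻¹).val
        = r.val * ((Monoid.PushoutI.base (famInc S.P₁ S.P₂) h)⁻¹ • r).val⁻¹ from rfl,
      base_smul_val]
    simpa using h.2
  · show S.o₁ (famInc S.P₁ S.P₂ true h) = S.o₂ (famInc S.P₁ S.P₂ false h)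
    rw [o₁_base, o₂_base]

/-- The master cocycle homomorphism out of the pushout. -/
noncomputable def Setup.L : S.G →* S.W X :=
  Monoid.PushoutI.lift
    (fun b => match b with
      | true => S.hc₁ d₁
      | false => S.hc₂ d₂)
    ((S.hc₁ d₁).comp (famInc S.P₁ S.P₂ true))
    (fun b => match b with
      | true => rfl
      | false => (hc_comp_eq S d₁ d₂ hd).symm)

@[simp] lemma L_o₁ (p : ↥S.P₁) : S.L d₁ d₂ hd (S.o₁ p) = S.hc₁ d₁ p :=
  Monoid.PushoutI.lift_of _ _ _ _

@[simp] lemma L_o₂ (p : ↥S.P₂) : S.L d₁ d₂ hd (S.o₂ p) = S.hc₂ d₂ p :=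
  Monoid.PushoutI.lift_of _ _ _ _

lemma L_right (g : S.G) : (S.L d₁ d₂ hd g).right = g := by
  have : SemidirectProduct.rightHom.comp (S.L d₁ d₂ hd) = MonoidHom.id _ := by
    apply Monoid.PushoutI.hom_ext_nonempty
    intro i
    ext p
    match i with
    | true => show (S.L d₁ d₂ hd (S.o₁ p)).right = S.o₁ p; exact congrArg SemidirectProduct.right (L_o₁ S d₁ d₂ hd p)
    | false => show (S.L d₁ d₂ hd (S.o₂ p)).right = S.o₂ p; exact congrArg SemidirectProduct.right (L_o₂ S d₁ d₂ hd p)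
  exact DFunLike.congr_fun this g

lemma L_left_mul (g g' : S.G) (r : S.RT) :
    (S.L d₁ d₂ hd (g * g')).left r =
      (S.L d₁ d₂ hd g).left r * (S.L d₁ d₂ hd g').left (g⁻¹ • r) := by
  rw [map_mul]
  show (S.L d₁ d₂ hd g).left r *
    (mulAutArrow (S.L d₁ d₂ hd g).right ((S.L d₁ d₂ hd g').left)) r = _
  rw [mulAutArrow_apply, L_right]

end Cocycle
end S19

namespace S19
open Monoid.PushoutI
section NoFG

open Classical in
/-- indicator cocycle potential: class of `B * (M n 0 0)⁻¹`. -/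
noncomputable def Setup.uM (S : Setup) (n : ℤ) (m : SL3) : Multiplicative ℤ :=
  if m * M n 0 0 ∈ S.P₁ ⊓ S.P₂ then Multiplicative.ofAdd (1:ℤ) else 1

variable (S : Setup)

lemma uM_hd (n : ℤ) : ∀ r p : S.RT, (r * p⁻¹).val ∈ S.P₁ ⊓ S.P₂ →
    (fun x : S.RT => S.uM n x.val) r * ((fun x : S.RT => S.uM n x.val) p)⁻¹ =
      (fun _ : S.RT => (1 : Multiplicative ℤ)) r * ((fun _ : S.RT => (1:Multiplicative ℤ)) p)⁻¹ := by
  intro r p hrp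
  have h : S.uM n r.val = S.uM n p.val := by
    unfold Setup.uM
    have heq : r.val * M n 0 0 ∈ S.P₁ ⊓ S.P₂ ↔ p.val * M n 0 0 ∈ S.P₁ ⊓ S.P₂ := by
      have h2 : r.val * M n 0 0 = (r * p⁻¹).val * (p.val * M n 0 0) := by
        simp [mul_assoc]
      rw [h2]
      exact Subgroup.mul_mem_cancel_left _ hrp
    split_ifs <;> first | rfl | (exfalso; tauto)
  show S.uM n r.val * (S.uM n p.val)⁻¹ = 1 * (1:Multiplicative ℤ)⁻¹
  rw [h]
  simp

/-- The `n`-th test cocycle homomorphism. -/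
noncomputable def Setup.LX (n : ℤ) : S.G →* S.W (Multiplicative ℤ) :=
  S.L (fun x : S.RT => S.uM n x.val) (fun _ => 1) (uM_hd S n)

lemma LX_left_mul (n : ℤ) (g g' : S.G) (r : S.RT) :
    (S.LX n (g * g')).left r = (S.LX n g).left r * (S.LX n g').left (g⁻¹ • r) :=
  L_left_mul _ _ _ _ _ _ _

lemma LX_left_o₂ (n : ℤ) (p : ↥S.P₂) (r : S.RT) : (S.LX n (S.o₂ p)).left r = 1 := by
  rw [Setup.LX, L_o₂]
  show (1:Multiplicative ℤ) * (1:Multiplicative ℤ)⁻¹ = 1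
  simp

lemma LX_left_o₂_inv (n : ℤ) (p : ↥S.P₂) (r : S.RT) : (S.LX n (S.o₂ p)⁻¹).left r = 1 := by
  rw [← map_inv, LX_left_o₂]

lemma LX_left_o₁ (n : ℤ) (p : ↥S.P₁) (r : S.RT) :
    (S.LX n (S.o₁ p)).left r = S.uM n r.val * (S.uM n (p.val⁻¹ * r.val))⁻¹ := by
  rw [Setup.LX, L_o₁]
  show S.uM n r.val * (S.uM n ((S.o₁ p)⁻¹ • r).val)⁻¹ = _
  rw [smul_val, map_inv, φ_o₁]

lemma LX_left_o₁_inv (n : ℤ) (p : ↥S.P₁) (r : S.RT) :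
    (S.LX n (S.o₁ p)⁻¹).left r = S.uM n r.val * (S.uM n (p.val * r.val))⁻¹ := by
  rw [← map_inv, LX_left_o₁]
  simp

lemma LX_left_base (n : ℤ) (h : ↥(S.P₁ ⊓ S.P₂)) (r : S.RT) :
    (S.LX n (Monoid.PushoutI.base (famInc S.P₁ S.P₂) h)).left r = 1 := by
  rw [← o₂_base]; exact LX_left_o₂ S n _ r

/-- kernel elements give homomorphisms to `ℤ`. -/
noncomputable def Setup.hn (n : ℤ) : ↥S.φ.ker →* Multiplicative ℤ where
  toFun k := (S.LX n k.val).left 1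
  map_one' := by
    show (S.LX n 1).left 1 = 1
    rw [map_one]
    rfl
  map_mul' k k' := by
    show (S.LX n (k.val * k'.val)).left 1
      = (S.LX n k.val).left 1 * (S.LX n k'.val).left 1
    rw [LX_left_mul]
    have hpt : ((k.val)⁻¹ • (1 : S.RT)) = 1 := by
      apply Subtype.ext
      rw [smul_val, map_inv]
      have hk : S.φ k.val = 1 := k.2
      simp [hk]
    rw [hpt]

/-- finite support of the family of homomorphisms. -/
lemma LX_left_support (g : S.G) : ∀ q : S.RT, ∃ Φ : Finset SL3,
    ∀ n : ℤ, (∀ z ∈ Φ, z * M n 0 0 ∉ S.P₁ ⊓ S.P₂) → (S.LX n g).left q = 1 := by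
  classical
  induction g using Monoid.PushoutI.induction_on with
  | of i p =>
    intro q
    match i with
    | true =>
      refine ⟨{q.val, p.val⁻¹ * q.val}, fun n hn => ?_⟩
      have h1 := hn q.val (by simp)
      have h2 := hn (p.val⁻¹ * q.val) (by simp)
      rw [show Monoid.PushoutI.of true p = S.o₁ p from rfl]
      change ↥S.P₁ at p
      rw [LX_left_o₁]
      unfold Setup.uM
      rw [if_neg h1, if_neg h2]
      simp
    | false =>
      refine ⟨∅, fun n _ => ?_⟩
      rw [show Monoid.PushoutI.of false p = S.o₂ p from rfl]
      exact LX_left_o₂ S n p q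
  | base h =>
    intro q
    exact ⟨∅, fun n _ => LX_left_base S n h q⟩
  | mul x y ihx ihy =>
    intro q
    obtain ⟨Φx, hx⟩ := ihx q
    obtain ⟨Φy, hy⟩ := ihy (x⁻¹ • q)
    refine ⟨Φx ∪ Φy, fun n hn => ?_⟩
    rw [LX_left_mul, hx n (fun z hz => hn z (Finset.mem_union_left _ hz)),
      hy n (fun z hz => hn z (Finset.mem_union_right _ hz)), one_mul]

lemma badn_unique (z : SL3) (n m : ℤ) (h1 : z * M n 0 0 ∈ S.P₁ ⊓ S.P₂)
    (h2 : z * M m 0 0 ∈ S.P₁ ⊓ S.P₂) : n = m := by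
  have h3 := Subgroup.mul_mem _ (Subgroup.inv_mem _ h1) h2
  rw [mul_inv_rev] at h3
  have e : (M n 0 0)⁻¹ * z⁻¹ * (z * M m 0 0) = (M n 0 0)⁻¹ * M m 0 0 := by group
  rw [e, M_inv, M_mul, M_memB] at h3
  simp only [zero_mul, mul_zero, neg_zero, sub_zero, add_zero, zero_add] at h3
  omega

end NoFG
end S19

namespace S19
section KN
variable (S : Setup)

def Setup.ym (n : ℤ) : ↥S.P₂ := ⟨M n 0 0, by rw [M_mem₂]; exact ⟨rfl, rfl⟩⟩

def Setup.xe : ↥S.P₁ := ⟨M 0 0 1, by rw [M_mem₁]; exact ⟨rfl, rfl⟩⟩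

@[simp] lemma ym_val (n : ℤ) : (S.ym n).val = M n 0 0 := rfl
@[simp] lemma xe_val : S.xe.val = M 0 0 1 := rfl

/-- the family of kernel elements `[[yₙ,x],y]`. -/
def Setup.kn (n : ℤ) : S.G :=
  S.o₂ (S.ym n) * S.o₁ S.xe * (S.o₂ (S.ym n))⁻¹ * (S.o₁ S.xe)⁻¹ * S.o₂ (S.ym 1) *
    S.o₁ S.xe * S.o₂ (S.ym n) * (S.o₁ S.xe)⁻¹ * (S.o₂ (S.ym n))⁻¹ * (S.o₂ (S.ym 1))⁻¹

lemma kn_ker (n : ℤ) : S.kn n ∈ S.φ.ker := by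
  rw [MonoidHom.mem_ker, Setup.kn]
  simp only [map_mul, map_inv, φ_o₁, φ_o₂, ym_val, xe_val]
  simp only [M_inv, M_mul]
  rw [← M_one]
  congr 1 <;> ring

set_option maxHeartbeats 2000000 in
lemma hn_kn (n : ℤ) (hn2 : 2 ≤ n) :
    S.hn n ⟨S.kn n, kn_ker S n⟩ = Multiplicative.ofAdd (1:ℤ) := by
  show (S.LX n (S.kn n)).left 1 = Multiplicative.ofAdd (1:ℤ)
  rw [Setup.kn]
  simp only [LX_left_mul, LX_left_o₂, LX_left_o₂_inv, LX_left_o₁, LX_left_o₁_inv,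
    one_mul, mul_one]
  simp only [smul_val, map_mul, map_inv, φ_o₁, φ_o₂, ym_val, xe_val, OneMemClass.coe_one,
    mul_one, one_mul]
  simp only [M_inv, M_mul, mul_one, one_mul]
  unfold Setup.uM
  simp only [M_mul, M_memB]
  split_ifs <;> first
    | (exfalso; omega)
    | simp
    | rfl

end KN

section NotFGThm
variable (S : Setup)

theorem Setup.notFG : ¬ Group.FG ↥S.φ.ker := by
  classical
  intro hFG
  obtain ⟨Sgen, hSgen⟩ := hFG.out
  have H : ∀ k : ↥S.φ.ker, ∃ Φ : Finset SL3,
      ∀ n : ℤ, (∀ z ∈ Φ, z * M n 0 0 ∉ S.P₁ ⊓ S.P₂) → (S.LX n k.val).left 1 = 1 :=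
    fun k => LX_left_support S k.val 1
  choose Φf hΦf using H
  set T : Finset SL3 := Sgen.biUnion Φf with hT
  have hBadFin : {n : ℤ | ∃ z ∈ T, z * M n 0 0 ∈ S.P₁ ⊓ S.P₂}.Finite := by
    have : {n : ℤ | ∃ z ∈ T, z * M n 0 0 ∈ S.P₁ ⊓ S.P₂} ⊆
        ⋃ z ∈ (T : Set SL3), {n : ℤ | z * M n 0 0 ∈ S.P₁ ⊓ S.P₂} := by
      rintro n ⟨z, hz, hmem⟩
      exact Set.mem_biUnion hz hmem
    refine Set.Finite.subset (Set.Finite.biUnion T.finite_toSet (fun z _ => ?_)) this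
    apply Set.Subsingleton.finite
    intro a ha b hb
    exact badn_unique S z a b ha hb
  have hInf : (Set.Ici (2:ℤ) \ {n : ℤ | ∃ z ∈ T, z * M n 0 0 ∈ S.P₁ ⊓ S.P₂}).Infinite :=
    Set.Infinite.diff (Set.Ici_infinite 2) hBadFin
  obtain ⟨n, hn⟩ := hInf.nonempty
  obtain ⟨hn2, hnbad⟩ := hn
  have hvanish : ∀ k ∈ Sgen, k ∈ (S.hn n).ker := by
    intro k hk
    rw [MonoidHom.mem_ker]
    show (S.LX n k.val).left 1 = 1
    apply hΦf k n
    intro z hz hmem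
    exact hnbad ⟨z, Finset.mem_biUnion.2 ⟨k, hk, hz⟩, hmem⟩
  have htop : (⊤ : Subgroup ↥S.φ.ker) ≤ (S.hn n).ker := by
    rw [← hSgen]
    exact (Subgroup.closure_le _).2 hvanish
  have h1 := htop (Subgroup.mem_top ⟨S.kn n, kn_ker S n⟩)
  rw [MonoidHom.mem_ker, hn_kn S n hn2] at h1
  exact absurd h1 (by simp)

end NotFGThm
end S19

namespace S19
section Trans
variable (S : Setup)

/-- setoid of right `A₁`-cosets (orbits of left multiplication by `P₁∩R`). -/
def Setup.s₁ : Setoid S.RT where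
  r x y := (y * x⁻¹).val ∈ S.P₁
  iseqv := by
    constructor
    · intro x
      have h0 : ((x * x⁻¹ : S.RT)).val = 1 := by push_cast; group
      rw [h0]
      exact Subgroup.one_mem _
    · intro x y h
      have : ((x * y⁻¹ : S.RT)).val = (((y * x⁻¹ : S.RT))⁻¹).val := by group
      rw [this]
      exact Subgroup.inv_mem _ h
    · intro x y z h1 h2
      have : ((z * x⁻¹ : S.RT)).val = ((z * y⁻¹ : S.RT)).val * ((y * x⁻¹ : S.RT)).val := by
        push_cast
        group
      rw [this]
      exact Subgroup.mul_mem _ h2 h1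

def Setup.s₂ : Setoid S.RT where
  r x y := (y * x⁻¹).val ∈ S.P₂
  iseqv := by
    constructor
    · intro x
      have h0 : ((x * x⁻¹ : S.RT)).val = 1 := by push_cast; group
      rw [h0]
      exact Subgroup.one_mem _
    · intro x y h
      have : ((x * y⁻¹ : S.RT)).val = (((y * x⁻¹ : S.RT))⁻¹).val := by group
      rw [this]
      exact Subgroup.inv_mem _ h
    · intro x y z h1 h2
      have : ((z * x⁻¹ : S.RT)).val = ((z * y⁻¹ : S.RT)).val * ((y * x⁻¹ : S.RT)).val := by
        push_cast
        group
      rw [this]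
      exact Subgroup.mul_mem _ h2 h1

def Setup.sC : Setoid S.RT where
  r x y := (y * x⁻¹).val ∈ S.P₁ ⊓ S.P₂
  iseqv := by
    constructor
    · intro x
      have h0 : ((x * x⁻¹ : S.RT)).val = 1 := by push_cast; group
      rw [h0]
      exact Subgroup.one_mem _
    · intro x y h
      have : ((x * y⁻¹ : S.RT)).val = (((y * x⁻¹ : S.RT))⁻¹).val := by group
      rw [this]
      exact Subgroup.inv_mem _ h
    · intro x y z h1 h2
      have : ((z * x⁻¹ : S.RT)).val = ((z * y⁻¹ : S.RT)).val * ((y * x⁻¹ : S.RT)).val := by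
        push_cast
        group
      rw [this]
      exact Subgroup.mul_mem _ h2 h1

noncomputable def Setup.rep₁ : S.RT → S.RT := fun x => (Quotient.mk S.s₁ x).out
noncomputable def Setup.rep₂ : S.RT → S.RT := fun x => (Quotient.mk S.s₂ x).out
noncomputable def Setup.repC : S.RT → S.RT := fun x => (Quotient.mk S.sC x).out

lemma rep₁_spec (x : S.RT) : (x * (S.rep₁ x)⁻¹).val ∈ S.P₁ :=
  (Quotient.mk_out (s := S.s₁) x : S.s₁.r _ x)

lemma rep₂_spec (x : S.RT) : (x * (S.rep₂ x)⁻¹).val ∈ S.P₂ :=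
  (Quotient.mk_out (s := S.s₂) x : S.s₂.r _ x)

lemma repC_spec (x : S.RT) : (x * (S.repC x)⁻¹).val ∈ S.P₁ ⊓ S.P₂ :=
  (Quotient.mk_out (s := S.sC) x : S.sC.r _ x)

lemma rep₁_congr {x y : S.RT} (h : (y * x⁻¹).val ∈ S.P₁) : S.rep₁ x = S.rep₁ y := by
  unfold Setup.rep₁
  rw [Quotient.sound (a := x) (b := y) h]

lemma rep₂_congr {x y : S.RT} (h : (y * x⁻¹).val ∈ S.P₂) : S.rep₂ x = S.rep₂ y := by
  unfold Setup.rep₂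
  rw [Quotient.sound (a := x) (b := y) h]

lemma repC_congr {x y : S.RT} (h : (y * x⁻¹).val ∈ S.P₁ ⊓ S.P₂) : S.repC x = S.repC y := by
  unfold Setup.repC
  rw [Quotient.sound (a := x) (b := y) h]

lemma rep₁_idem (x : S.RT) : S.rep₁ (S.rep₁ x) = S.rep₁ x :=
  rep₁_congr S (rep₁_spec S x)

lemma rep₂_idem (x : S.RT) : S.rep₂ (S.rep₂ x) = S.rep₂ x :=
  rep₂_congr S (rep₂_spec S x)

lemma repC_idem (x : S.RT) : S.repC (S.repC x) = S.repC x :=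
  repC_congr S (repC_spec S x)

def Setup.inT₁ (x : S.RT) : Prop := S.rep₁ x = x
def Setup.inT₂ (x : S.RT) : Prop := S.rep₂ x = x

/-- a `B`-class is forced if it contains a point of `T₁ ∩ T₂`. -/
def Setup.forced (x : S.RT) : Prop :=
  ∃ t : S.RT, S.inT₁ t ∧ S.inT₂ t ∧ (t * x⁻¹).val ∈ S.P₁ ⊓ S.P₂

lemma forced_congr {x y : S.RT} (h : (y * x⁻¹).val ∈ S.P₁ ⊓ S.P₂) :
    (S.forced x ↔ S.forced y) := by
  constructor <;> rintro ⟨t, h1, h2, h3⟩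
  · refine ⟨t, h1, h2, ?_⟩
    have : ((t * y⁻¹ : S.RT)).val = ((t * x⁻¹ : S.RT)).val * (((y * x⁻¹ : S.RT))⁻¹).val := by
      push_cast
      group
    rw [this]
    exact Subgroup.mul_mem _ h3 (Subgroup.inv_mem _ h)
  · refine ⟨t, h1, h2, ?_⟩
    have : ((t * x⁻¹ : S.RT)).val = ((t * y⁻¹ : S.RT)).val * ((y * x⁻¹ : S.RT)).val := by
      push_cast
      group
    rw [this]
    exact Subgroup.mul_mem _ h3 h

/-- the group element of `P₁` moving `x` to `y`, for `x,y` in the same orbit. -/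
def Setup.mv₁ (x y : S.RT) (h : (y * x⁻¹).val ∈ S.P₁) : S.G := S.o₁ ⟨(y * x⁻¹).val, h⟩

def Setup.mv₂ (x y : S.RT) (h : (y * x⁻¹).val ∈ S.P₂) : S.G := S.o₂ ⟨(y * x⁻¹).val, h⟩

lemma mv₁_smul (x y : S.RT) (h : (y * x⁻¹).val ∈ S.P₁) : S.mv₁ x y h • x = y := by
  apply Subtype.ext
  rw [smul_val, Setup.mv₁, φ_o₁]
  push_cast
  group

lemma mv₂_smul (x y : S.RT) (h : (y * x⁻¹).val ∈ S.P₂) : S.mv₂ x y h • x = y := by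
  apply Subtype.ext
  rw [smul_val, Setup.mv₂, φ_o₂]
  push_cast
  group

lemma mv₁_mul (x y z : S.RT) (h1 : (y * x⁻¹).val ∈ S.P₁) (h2 : (z * y⁻¹).val ∈ S.P₁)
    (h3 : (z * x⁻¹).val ∈ S.P₁) : S.mv₁ y z h2 * S.mv₁ x y h1 = S.mv₁ x z h3 := by
  unfold Setup.mv₁
  rw [← map_mul]
  congr 1
  apply Subtype.ext
  push_cast
  group

lemma mv₂_mul (x y z : S.RT) (h1 : (y * x⁻¹).val ∈ S.P₂) (h2 : (z * y⁻¹).val ∈ S.P₂)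
    (h3 : (z * x⁻¹).val ∈ S.P₂) : S.mv₂ y z h2 * S.mv₂ x y h1 = S.mv₂ x z h3 := by
  unfold Setup.mv₂
  rw [← map_mul]
  congr 1
  apply Subtype.ext
  push_cast
  group

lemma mv₁_self (x : S.RT) (h : (x * x⁻¹).val ∈ S.P₁) : S.mv₁ x x h = 1 := by
  unfold Setup.mv₁
  rw [show (⟨(x * x⁻¹).val, h⟩ : ↥S.P₁) = 1 by apply Subtype.ext; push_cast; group]
  exact map_one _

lemma mv₂_self (x : S.RT) (h : (x * x⁻¹).val ∈ S.P₂) : S.mv₂ x x h = 1 := by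
  unfold Setup.mv₂
  rw [show (⟨(x * x⁻¹).val, h⟩ : ↥S.P₂) = 1 by apply Subtype.ext; push_cast; group]
  exact map_one _

/-- base elements of the amalgam moving `x` to `y` within a `B`-class. -/
def Setup.mvB (x y : S.RT) (h : (y * x⁻¹).val ∈ S.P₁ ⊓ S.P₂) : S.G :=
  Monoid.PushoutI.base (famInc S.P₁ S.P₂) ⟨(y * x⁻¹).val, h⟩

lemma mvB_eq_mv₁ (x y : S.RT) (h : (y * x⁻¹).val ∈ S.P₁ ⊓ S.P₂) :
    S.mvB x y h = S.mv₁ x y h.1 := by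
  rw [Setup.mvB, ← o₁_base]
  rfl

lemma mvB_eq_mv₂ (x y : S.RT) (h : (y * x⁻¹).val ∈ S.P₁ ⊓ S.P₂) :
    S.mvB x y h = S.mv₂ x y h.2 := by
  rw [Setup.mvB, ← o₂_base]
  rfl

end Trans
end S19

namespace S19
open CategoryTheory
section GenQuiver
variable (S : Setup)

lemma rep₁_spec' (x : S.RT) : ((S.rep₁ x) * x⁻¹).val ∈ S.P₁ := by
  have h := Subgroup.inv_mem _ (rep₁_spec S x)
  have e : ((S.rep₁ x * x⁻¹ : S.RT)).val = (((x * (S.rep₁ x)⁻¹ : S.RT))⁻¹).val := by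
    push_cast; group
  rw [e]; exact h

lemma rep₂_spec' (x : S.RT) : ((S.rep₂ x) * x⁻¹).val ∈ S.P₂ := by
  have h := Subgroup.inv_mem _ (rep₂_spec S x)
  have e : ((S.rep₂ x * x⁻¹ : S.RT)).val = (((x * (S.rep₂ x)⁻¹ : S.RT))⁻¹).val := by
    push_cast; group
  rw [e]; exact h

abbrev Setup.ACat : Type := ActionCategory S.G S.RT

noncomputable def Setup.pt (r : S.RT) : S.ACat := (ActionCategory.objEquiv S.G S.RT) r

@[simp] lemma pt_back (r : S.RT) : ActionCategory.back (S.pt r) = r := rfl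

/-- generating quiver arrows. -/
def Setup.Gen (a b : S.ACat) : Type :=
  ({q : S.RT // (¬S.inT₁ q ∧ ¬S.inT₂ q) ∧
      ActionCategory.back a = S.rep₂ q ∧ ActionCategory.back b = q}) ⊕
  ({q : S.RT // (S.repC q = q ∧ ¬S.forced q) ∧
      ActionCategory.back a = S.rep₁ q ∧ ActionCategory.back b = S.rep₂ q})

noncomputable def Setup.genOf {a b : S.ACat} (e : S.Gen a b) : a ⟶ b :=
  match e with
  | Sum.inl ⟨q, h⟩ => ⟨S.mv₂ (S.rep₂ q) q (rep₂_spec S q), by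
      show S.mv₂ (S.rep₂ q) q (rep₂_spec S q) • ActionCategory.back a = ActionCategory.back b
      rw [h.2.1, h.2.2]; exact mv₂_smul S _ _ _⟩
  | Sum.inr ⟨q, h⟩ => ⟨S.mv₂ q (S.rep₂ q) (rep₂_spec' S q) * S.mv₁ (S.rep₁ q) q (rep₁_spec S q), by
      show (S.mv₂ q (S.rep₂ q) (rep₂_spec' S q) * S.mv₁ (S.rep₁ q) q (rep₁_spec S q)) •
        ActionCategory.back a = ActionCategory.back b
      rw [h.2.1, h.2.2, mul_smul, mv₁_smul S _ _ _, mv₂_smul S _ _ _]⟩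

section Labelled
variable {X : Type} [Group X] (f : ∀ a b : S.ACat, S.Gen a b → X)

open Classical in
noncomputable def Setup.fU : S.RT → X := fun q =>
  if h : S.repC q = q ∧ ¬S.forced q then
    f (S.pt (S.rep₁ q)) (S.pt (S.rep₂ q)) (Sum.inr ⟨q, h, rfl, rfl⟩) else 1

open Classical in
noncomputable def Setup.fg2 : S.RT → X := fun q =>
  if h : ¬S.inT₁ q ∧ ¬S.inT₂ q then
    f (S.pt (S.rep₂ q)) (S.pt q) (Sum.inl ⟨q, h, rfl, rfl⟩) else 1

open Classical in
noncomputable def Setup.uu : S.RT → X := fun q =>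
  if S.forced q then 1 else S.fU f (S.repC q)

open Classical in
noncomputable def Setup.dd₂ : S.RT → X := fun q =>
  if S.inT₁ q then (S.uu f q)⁻¹ else if S.inT₂ q then 1 else S.fg2 f q

noncomputable def Setup.dd₁ : S.RT → X := fun q => S.dd₂ f q * S.uu f q

lemma uu_congr {x y : S.RT} (h : (y * x⁻¹).val ∈ S.P₁ ⊓ S.P₂) :
    S.uu f x = S.uu f y := by
  unfold Setup.uu
  rw [repC_congr S h]
  rcases Classical.em (S.forced x) with hf | hf
  · rw [if_pos hf, if_pos ((forced_congr S h).1 hf)]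
  · rw [if_neg hf, if_neg (fun hy => hf ((forced_congr S h).2 hy))]

lemma dd_hd : ∀ r p : S.RT, (r * p⁻¹).val ∈ S.P₁ ⊓ S.P₂ →
    S.dd₁ f r * (S.dd₁ f p)⁻¹ = S.dd₂ f r * (S.dd₂ f p)⁻¹ := by
  intro r p h
  have hu : S.uu f p = S.uu f r := uu_congr S f h
  unfold Setup.dd₁
  rw [hu]
  group

lemma forced_of_T₁T₂ {t : S.RT} (h1 : S.inT₁ t) (h2 : S.inT₂ t) : S.forced t := by
  refine ⟨t, h1, h2, ?_⟩
  have e : ((t * t⁻¹ : S.RT)).val = 1 := by push_cast; group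
  rw [e]; exact Subgroup.one_mem _

lemma uu_forced {q : S.RT} (h : S.forced q) : S.uu f q = 1 := by
  unfold Setup.uu; rw [if_pos h]

lemma dd₂_inT₂ {t : S.RT} (h : S.inT₂ t) : S.dd₂ f t = 1 := by
  unfold Setup.dd₂
  rcases Classical.em (S.inT₁ t) with h1 | h1
  · rw [if_pos h1, uu_forced S f (forced_of_T₁T₂ S h1 h)]
    exact inv_one
  · rw [if_neg h1, if_pos h]

lemma dd₁_inT₁ {t : S.RT} (h : S.inT₁ t) : S.dd₁ f t = 1 := by
  unfold Setup.dd₁ Setup.dd₂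
  rw [if_pos h]
  exact inv_mul_cancel _

/-- The lifted cocycle homomorphism for a labelling. -/
noncomputable def Setup.LF : S.G →* S.W X := S.L (S.dd₁ f) (S.dd₂ f) (dd_hd S f)

/-- The lifted functor for a labelling. -/
noncomputable def Setup.FF : S.ACat ⥤ SingleObj X :=
  ActionCategory.uncurry (S.LF f) (fun g => L_right S _ _ _ g)

lemma LF_left_mul (g g' : S.G) (r : S.RT) :
    (S.LF f (g * g')).left r = (S.LF f g).left r * (S.LF f g').left (g⁻¹ • r) :=
  L_left_mul S _ _ _ g g' r

lemma LF_left_o₁ (p : ↥S.P₁) (r : S.RT) :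
    (S.LF f (S.o₁ p)).left r = S.dd₁ f r * (S.dd₁ f ((S.o₁ p)⁻¹ • r))⁻¹ := by
  rw [Setup.LF, L_o₁]; rfl

lemma LF_left_o₂ (p : ↥S.P₂) (r : S.RT) :
    (S.LF f (S.o₂ p)).left r = S.dd₂ f r * (S.dd₂ f ((S.o₂ p)⁻¹ • r))⁻¹ := by
  rw [Setup.LF, L_o₂]; rfl

lemma mv₁_inv_smul (x y : S.RT) (h : (y * x⁻¹).val ∈ S.P₁) : (S.mv₁ x y h)⁻¹ • y = x := by
  rw [inv_smul_eq_iff, mv₁_smul]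

lemma mv₂_inv_smul (x y : S.RT) (h : (y * x⁻¹).val ∈ S.P₂) : (S.mv₂ x y h)⁻¹ • y = x := by
  rw [inv_smul_eq_iff, mv₂_smul]

lemma FF_map_gen {a b : S.ACat} (e : S.Gen a b) :
    (S.FF f).map (S.genOf e) = f a b e := by
  rcases a with ⟨⟨⟩, ra⟩
  rcases b with ⟨⟨⟩, rb⟩
  rcases e with ⟨q, hq, ha, hb⟩ | ⟨q, hq, ha, hb⟩
  · change ra = S.rep₂ q at ha
    change rb = q at hb
    subst ra; subst rb
    show (S.LF f (S.mv₂ (S.rep₂ q) q (rep₂_spec S q))).left q = _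
    rw [show S.mv₂ (S.rep₂ q) q (rep₂_spec S q)
        = S.o₂ ⟨(q * (S.rep₂ q)⁻¹).val, rep₂_spec S q⟩ from rfl, LF_left_o₂]
    rw [show S.o₂ ⟨(q * (S.rep₂ q)⁻¹).val, rep₂_spec S q⟩
        = S.mv₂ (S.rep₂ q) q (rep₂_spec S q) from rfl, mv₂_inv_smul]
    rw [dd₂_inT₂ S f (rep₂_idem S q), inv_one, mul_one]
    unfold Setup.dd₂
    rw [if_neg hq.1, if_neg hq.2]
    unfold Setup.fg2
    rw [dif_pos hq]
    rfl
  · change ra = S.rep₁ q at ha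
    change rb = S.rep₂ q at hb
    subst ra; subst rb
    show (S.LF f (S.mv₂ q (S.rep₂ q) (rep₂_spec' S q)
      * S.mv₁ (S.rep₁ q) q (rep₁_spec S q))).left (S.rep₂ q) = _
    rw [LF_left_mul]
    rw [show S.mv₂ q (S.rep₂ q) (rep₂_spec' S q)
        = S.o₂ ⟨((S.rep₂ q) * q⁻¹).val, rep₂_spec' S q⟩ from rfl, LF_left_o₂]
    rw [show S.o₂ ⟨((S.rep₂ q) * q⁻¹).val, rep₂_spec' S q⟩
        = S.mv₂ q (S.rep₂ q) (rep₂_spec' S q) from rfl, mv₂_inv_smul]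
    rw [show S.mv₁ (S.rep₁ q) q (rep₁_spec S q)
        = S.o₁ ⟨(q * (S.rep₁ q)⁻¹).val, rep₁_spec S q⟩ from rfl, LF_left_o₁]
    rw [show S.o₁ ⟨(q * (S.rep₁ q)⁻¹).val, rep₁_spec S q⟩
        = S.mv₁ (S.rep₁ q) q (rep₁_spec S q) from rfl, mv₁_inv_smul]
    rw [dd₂_inT₂ S f (rep₂_idem S q), dd₁_inT₁ S f (rep₁_idem S q), inv_one, one_mul, mul_one]
    unfold Setup.dd₁
    rw [← mul_assoc, inv_mul_cancel, one_mul]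
    unfold Setup.uu
    rw [if_neg hq.2]
    have hrw : S.fU f (S.repC q) = S.fU f q := by rw [hq.1]
    rw [hrw]
    unfold Setup.fU
    rw [dif_pos hq]
    rfl

end Labelled
end GenQuiver
end S19

namespace S19
open CategoryTheory
section Unique
variable (S : Setup) {X : Type} [Group X] (f : ∀ a b : S.ACat, S.Gen a b → X)
variable (E : S.ACat ⥤ SingleObj X)

/-- the morphism `(g, x → y)` of the action category. -/
def Setup.mor (x y : S.RT) (g : S.G) (hg : g • x = y) : S.pt x ⟶ S.pt y := ⟨g, hg⟩

/-- evaluation of the functor `E` on the morphism `(g, x → y)`. -/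
noncomputable def Setup.EV (x y : S.RT) (g : S.G) (hg : g • x = y) : X :=
  E.map (S.mor x y g hg)

lemma smul_comp_pf {x y z : S.RT} {g g' : S.G} (h1 : g • x = y) (h2 : g' • y = z) :
    (g' * g) • x = z := by rw [mul_smul, h1, h2]

lemma EV_comp {x y z : S.RT} {g g' : S.G} (h1 : g • x = y) (h2 : g' • y = z) :
    S.EV E y z g' h2 * S.EV E x y g h1 = S.EV E x z (g' * g) (smul_comp_pf S h1 h2) := by
  unfold Setup.EV
  have hcomp : S.mor x y g h1 ≫ S.mor y z g' h2
      = S.mor x z (g' * g) (smul_comp_pf S h1 h2) := Subtype.ext rfl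
  rw [← hcomp, E.map_comp]
  rfl

lemma EV_one (x : S.RT) (hx : (1 : S.G) • x = x) : S.EV E x x 1 hx = 1 := by
  unfold Setup.EV
  have h0 : S.mor x x 1 hx = 𝟙 (S.pt x) := rfl
  rw [h0, E.map_id]
  rfl

lemma EV_congr {x x' y : S.RT} {g g' : S.G} (hx : x = x') (hgg : g = g')
    (h : g • x = y) (h' : g' • x' = y) : S.EV E x y g h = S.EV E x' y g' h' := by
  subst hx; subst hgg; rfl

lemma EV_inv {x y : S.RT} {g : S.G} (h : g • x = y) (h' : g⁻¹ • y = x) :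
    S.EV E y x g⁻¹ h' = (S.EV E x y g h)⁻¹ := by
  have hc := EV_comp S E (x := x) (y := y) (z := x) h h'
  have h2 : S.EV E x x (g⁻¹ * g) (smul_comp_pf S h h') = 1 :=
    (EV_congr S E rfl (inv_mul_cancel g) _ (one_smul _ x)).trans (EV_one S E x _)
  rw [h2] at hc
  exact eq_inv_of_mul_eq_one_left hc

/-- morphism values along `T₁`-edges. -/
noncomputable def Setup.DD₁ (q : S.RT) : X := S.EV E (S.rep₁ q) q (S.mv₁ _ q (rep₁_spec S q)) (mv₁_smul S _ _ _)

noncomputable def Setup.DD₂ (q : S.RT) : X := S.EV E (S.rep₂ q) q (S.mv₂ _ q (rep₂_spec S q)) (mv₂_smul S _ _ _)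

noncomputable def Setup.ratio (q : S.RT) : X := (S.DD₂ E q)⁻¹ * S.DD₁ E q

lemma mv₁_congr {x x' y : S.RT} (h : x = x') (hm : (y * x⁻¹).val ∈ S.P₁)
    (hm' : (y * x'⁻¹).val ∈ S.P₁) : S.mv₁ x y hm = S.mv₁ x' y hm' := by subst h; rfl

lemma mv₂_congr {x x' y : S.RT} (h : x = x') (hm : (y * x⁻¹).val ∈ S.P₂)
    (hm' : (y * x'⁻¹).val ∈ S.P₂) : S.mv₂ x y hm = S.mv₂ x' y hm' := by subst h; rfl

lemma memB_inv {x y : S.RT} (h : (y * x⁻¹).val ∈ S.P₁ ⊓ S.P₂) :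
    (x * y⁻¹).val ∈ S.P₁ ⊓ S.P₂ := by
  have e : ((x * y⁻¹ : S.RT)).val = (((y * x⁻¹ : S.RT))⁻¹).val := by push_cast; group
  rw [e]
  exact Subgroup.inv_mem _ h

lemma mvB_smul (q x : S.RT) (h : (x * q⁻¹).val ∈ S.P₁ ⊓ S.P₂) : S.mvB q x h • q = x := by
  rw [mvB_eq_mv₂]
  exact mv₂_smul S _ _ _

/-- transport of `DD₂` along a `B`-move. -/
lemma DD₂_transport (q x : S.RT) (h : (x * q⁻¹).val ∈ S.P₁ ⊓ S.P₂) :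
    S.DD₂ E x = S.EV E q x (S.mvB q x h) (mvB_smul S q x h) * S.DD₂ E q := by
  unfold Setup.DD₂
  rw [EV_comp S E (mv₂_smul S _ _ _) (mvB_smul S q x h)]
  apply EV_congr
  · exact (rep₂_congr S (x := q) (y := x) h.2).symm
  · rw [mvB_eq_mv₂]
    rw [mv₂_mul S _ _ _ _ _ (by
      have e : ((x * (S.rep₂ q)⁻¹ : S.RT)).val
          = ((x * q⁻¹ : S.RT)).val * ((q * (S.rep₂ q)⁻¹ : S.RT)).val := by push_cast; group
      rw [e]; exact Subgroup.mul_mem _ h.2 (rep₂_spec S q))]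
    apply mv₂_congr
    exact (rep₂_congr S (x := q) (y := x) h.2).symm

lemma DD₁_transport (q x : S.RT) (h : (x * q⁻¹).val ∈ S.P₁ ⊓ S.P₂) :
    S.DD₁ E x = S.EV E q x (S.mvB q x h) (mvB_smul S q x h) * S.DD₁ E q := by
  unfold Setup.DD₁
  rw [EV_comp S E (mv₁_smul S _ _ _) (mvB_smul S q x h)]
  apply EV_congr
  · exact (rep₁_congr S (x := q) (y := x) h.1).symm
  · rw [mvB_eq_mv₁]
    rw [mv₁_mul S _ _ _ _ _ (by
      have e : ((x * (S.rep₁ q)⁻¹ : S.RT)).val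
          = ((x * q⁻¹ : S.RT)).val * ((q * (S.rep₁ q)⁻¹ : S.RT)).val := by push_cast; group
      rw [e]; exact Subgroup.mul_mem _ h.1 (rep₁_spec S q))]
    apply mv₁_congr
    exact (rep₁_congr S (x := q) (y := x) h.1).symm

lemma ratio_transport (q x : S.RT) (h : (x * q⁻¹).val ∈ S.P₁ ⊓ S.P₂) :
    S.ratio E x = S.ratio E q := by
  unfold Setup.ratio
  rw [DD₂_transport S E q x h, DD₁_transport S E q x h]
  group

lemma self_val_one (q : S.RT) : ((q * q⁻¹ : S.RT)).val = 1 := by push_cast; group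

lemma self_memP₁ (q : S.RT) : ((q * q⁻¹ : S.RT)).val ∈ S.P₁ := by
  rw [self_val_one]; exact Subgroup.one_mem _

lemma self_memP₂ (q : S.RT) : ((q * q⁻¹ : S.RT)).val ∈ S.P₂ := by
  rw [self_val_one]; exact Subgroup.one_mem _

lemma DD₁_inT₁ {q : S.RT} (h : S.inT₁ q) : S.DD₁ E q = 1 := by
  have hm : S.mv₁ (S.rep₁ q) q (rep₁_spec S q) = 1 :=
    (mv₁_congr S h (rep₁_spec S q) (self_memP₁ S q)).trans (mv₁_self S q _)
  unfold Setup.DD₁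
  rw [EV_congr S E h hm _ (by rw [one_smul])]
  exact EV_one S E q _

lemma DD₂_inT₂ {q : S.RT} (h : S.inT₂ q) : S.DD₂ E q = 1 := by
  have hm : S.mv₂ (S.rep₂ q) q (rep₂_spec S q) = 1 :=
    (mv₂_congr S h (rep₂_spec S q) (self_memP₂ S q)).trans (mv₂_self S q _)
  unfold Setup.DD₂
  rw [EV_congr S E h hm _ (by rw [one_smul])]
  exact EV_one S E q _

end Unique
end S19

namespace S19
open CategoryTheory
section Unique2
variable (S : Setup) {X : Type} [Group X] (f : ∀ a b : S.ACat, S.Gen a b → X)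
variable (E : S.ACat ⥤ SingleObj X)
variable (hE : ∀ (a b : S.ACat) (e : S.Gen a b), E.map (S.genOf e) = f a b e)

lemma mv₂_inv (x y : S.RT) (h : (y * x⁻¹).val ∈ S.P₂) (h' : (x * y⁻¹).val ∈ S.P₂) :
    (S.mv₂ x y h)⁻¹ = S.mv₂ y x h' := by
  unfold Setup.mv₂
  rw [← map_inv]
  congr 1
  apply Subtype.ext
  push_cast
  group

lemma mv₁_inv (x y : S.RT) (h : (y * x⁻¹).val ∈ S.P₁) (h' : (x * y⁻¹).val ∈ S.P₁) :
    (S.mv₁ x y h)⁻¹ = S.mv₁ y x h' := by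
  unfold Setup.mv₁
  rw [← map_inv]
  congr 1
  apply Subtype.ext
  push_cast
  group

lemma memP₂_inv {x y : S.RT} (h : (y * x⁻¹).val ∈ S.P₂) : (x * y⁻¹).val ∈ S.P₂ := by
  have e : ((x * y⁻¹ : S.RT)).val = (((y * x⁻¹ : S.RT))⁻¹).val := by push_cast; group
  rw [e]; exact Subgroup.inv_mem _ h

lemma memP₁_inv {x y : S.RT} (h : (y * x⁻¹).val ∈ S.P₁) : (x * y⁻¹).val ∈ S.P₁ := by
  have e : ((x * y⁻¹ : S.RT)).val = (((y * x⁻¹ : S.RT))⁻¹).val := by push_cast; group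
  rw [e]; exact Subgroup.inv_mem _ h

include hE in
lemma genU_value {q : S.RT} (hq : S.repC q = q ∧ ¬S.forced q) :
    S.ratio E q = S.fU f q := by
  have h0 := hE (S.pt (S.rep₁ q)) (S.pt (S.rep₂ q)) (Sum.inr ⟨q, hq, rfl, rfl⟩)
  have hmor : S.genOf (Sum.inr ⟨q, hq, (rfl : ActionCategory.back (S.pt (S.rep₁ q)) = _),
        (rfl : ActionCategory.back (S.pt (S.rep₂ q)) = _)⟩)
      = S.mor (S.rep₁ q) (S.rep₂ q)
          (S.mv₂ q (S.rep₂ q) (rep₂_spec' S q) * S.mv₁ (S.rep₁ q) q (rep₁_spec S q))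
          (by rw [mul_smul, mv₁_smul, mv₂_smul]) := Subtype.ext rfl
  rw [hmor] at h0
  have hsplit : S.EV E (S.rep₁ q) (S.rep₂ q)
      (S.mv₂ q (S.rep₂ q) (rep₂_spec' S q) * S.mv₁ (S.rep₁ q) q (rep₁_spec S q))
      (by rw [mul_smul, mv₁_smul, mv₂_smul])
      = S.EV E q (S.rep₂ q) (S.mv₂ q (S.rep₂ q) (rep₂_spec' S q)) (mv₂_smul S _ _ _)
        * S.DD₁ E q := by
    rw [Setup.DD₁, EV_comp S E (mv₁_smul S _ _ _) (mv₂_smul S _ _ _)]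
  have hEV : S.EV E (S.rep₁ q) (S.rep₂ q)
      (S.mv₂ q (S.rep₂ q) (rep₂_spec' S q) * S.mv₁ (S.rep₁ q) q (rep₁_spec S q))
      (by rw [mul_smul, mv₁_smul, mv₂_smul])
      = f (S.pt (S.rep₁ q)) (S.pt (S.rep₂ q)) (Sum.inr ⟨q, hq, rfl, rfl⟩) := h0
  have hinv : S.EV E q (S.rep₂ q) (S.mv₂ q (S.rep₂ q) (rep₂_spec' S q)) (mv₂_smul S _ _ _)
      = (S.DD₂ E q)⁻¹ := by
    rw [Setup.DD₂]
    rw [EV_congr S E rfl ((mv₂_inv S (S.rep₂ q) q (rep₂_spec S q) (rep₂_spec' S q)).symm)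
      _ (by rw [inv_smul_eq_iff, mv₂_smul])]
    exact EV_inv S E (mv₂_smul S _ _ _) _
  rw [hsplit, hinv] at hEV
  unfold Setup.ratio
  rw [hEV]
  unfold Setup.fU
  rw [dif_pos hq]

include hE in
lemma ratio_eq_uu (q : S.RT) : S.ratio E q = S.uu f q := by
  by_cases hf : S.forced q
  · rw [uu_forced S f hf]
    obtain ⟨t, h1, h2, h3⟩ := hf
    rw [← ratio_transport S E q t h3]
    unfold Setup.ratio
    rw [DD₁_inT₁ S E h1, DD₂_inT₂ S E h2]
    group
  · have hx2 : ¬S.forced (S.repC q) := fun h =>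
      hf ((forced_congr S (repC_spec S q)).1 h)
    have ht := ratio_transport S E q (S.repC q) (memB_inv S (repC_spec S q))
    rw [← ht, genU_value S f E hE ⟨repC_idem S q, hx2⟩]
    unfold Setup.uu
    rw [if_neg hf]

include hE in
lemma DD₂_eq (q : S.RT) : S.DD₂ E q = S.dd₂ f q := by
  by_cases h1 : S.inT₁ q
  · have hr : S.DD₂ E q = S.DD₁ E q * (S.ratio E q)⁻¹ := by
      unfold Setup.ratio; group
    rw [hr, ratio_eq_uu S f E hE, DD₁_inT₁ S E h1, one_mul]
    unfold Setup.dd₂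
    rw [if_pos h1]
  · by_cases h2 : S.inT₂ q
    · rw [DD₂_inT₂ S E h2]
      unfold Setup.dd₂
      rw [if_neg h1, if_pos h2]
    · have h0 := hE (S.pt (S.rep₂ q)) (S.pt q) (Sum.inl ⟨q, ⟨h1, h2⟩, rfl, rfl⟩)
      have hmor : S.genOf (Sum.inl ⟨q, ⟨h1, h2⟩,
            (rfl : ActionCategory.back (S.pt (S.rep₂ q)) = _),
            (rfl : ActionCategory.back (S.pt q) = _)⟩)
          = S.mor (S.rep₂ q) q (S.mv₂ (S.rep₂ q) q (rep₂_spec S q)) (mv₂_smul S _ _ _) :=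
        Subtype.ext rfl
      rw [hmor] at h0
      rw [show S.DD₂ E q = E.map (S.mor (S.rep₂ q) q (S.mv₂ (S.rep₂ q) q (rep₂_spec S q))
        (mv₂_smul S _ _ _)) from rfl, h0]
      unfold Setup.dd₂
      rw [if_neg h1, if_neg h2]
      unfold Setup.fg2
      rw [dif_pos ⟨h1, h2⟩]

include hE in
lemma DD₁_eq (q : S.RT) : S.DD₁ E q = S.dd₁ f q := by
  have hr : S.DD₁ E q = S.DD₂ E q * S.ratio E q := by
    unfold Setup.ratio; group
  rw [hr, ratio_eq_uu S f E hE, DD₂_eq S f E hE]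
  rfl

end Unique2
end S19

namespace S19
open CategoryTheory
section Final
variable (S : Setup) {X : Type} [Group X] (f : ∀ a b : S.ACat, S.Gen a b → X)
variable (E : S.ACat ⥤ SingleObj X)
variable (hE : ∀ (a b : S.ACat) (e : S.Gen a b), E.map (S.genOf e) = f a b e)

lemma EV_mv₁ (x y : S.RT) (hy : (y * x⁻¹).val ∈ S.P₁) :
    S.EV E x y (S.mv₁ x y hy) (mv₁_smul S _ _ _) = S.DD₁ E y * (S.DD₁ E x)⁻¹ := by
  have hrep : S.rep₁ x = S.rep₁ y := rep₁_congr S hy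
  have hmem : (y * (S.rep₁ x)⁻¹).val ∈ S.P₁ := by
    have e : ((y * (S.rep₁ x)⁻¹ : S.RT)).val
        = ((y * x⁻¹ : S.RT)).val * ((x * (S.rep₁ x)⁻¹ : S.RT)).val := by push_cast; group
    rw [e]; exact Subgroup.mul_mem _ hy (rep₁_spec S x)
  have hc := EV_comp S E (mv₁_smul S (S.rep₁ x) x (rep₁_spec S x)) (mv₁_smul S x y hy)
  have h3 : S.EV E (S.rep₁ x) y (S.mv₁ x y hy * S.mv₁ (S.rep₁ x) x (rep₁_spec S x))
      (smul_comp_pf S (mv₁_smul S _ _ _) (mv₁_smul S _ _ _)) = S.DD₁ E y := by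
    refine EV_congr S E hrep ?_ _ _
    rw [mv₁_mul S _ _ _ _ _ hmem]
    exact mv₁_congr S hrep hmem (rep₁_spec S y)
  rw [h3] at hc
  exact eq_mul_inv_of_mul_eq hc

lemma EV_mv₂ (x y : S.RT) (hy : (y * x⁻¹).val ∈ S.P₂) :
    S.EV E x y (S.mv₂ x y hy) (mv₂_smul S _ _ _) = S.DD₂ E y * (S.DD₂ E x)⁻¹ := by
  have hrep : S.rep₂ x = S.rep₂ y := rep₂_congr S hy
  have hmem : (y * (S.rep₂ x)⁻¹).val ∈ S.P₂ := by
    have e : ((y * (S.rep₂ x)⁻¹ : S.RT)).val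
        = ((y * x⁻¹ : S.RT)).val * ((x * (S.rep₂ x)⁻¹ : S.RT)).val := by push_cast; group
    rw [e]; exact Subgroup.mul_mem _ hy (rep₂_spec S x)
  have hc := EV_comp S E (mv₂_smul S (S.rep₂ x) x (rep₂_spec S x)) (mv₂_smul S x y hy)
  have h3 : S.EV E (S.rep₂ x) y (S.mv₂ x y hy * S.mv₂ (S.rep₂ x) x (rep₂_spec S x))
      (smul_comp_pf S (mv₂_smul S _ _ _) (mv₂_smul S _ _ _)) = S.DD₂ E y := by
    refine EV_congr S E hrep ?_ _ _
    rw [mv₂_mul S _ _ _ _ _ hmem]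
    exact mv₂_congr S hrep hmem (rep₂_spec S y)
  rw [h3] at hc
  exact eq_mul_inv_of_mul_eq hc

include hE in
lemma EV_case₁ (p : ↥S.P₁) (x y : S.RT) (hg : S.o₁ p • x = y) :
    S.EV E x y (S.o₁ p) hg = (S.LF f (S.o₁ p)).left y := by
  have hval : ((y * x⁻¹ : S.RT)).val = p.val := by
    rw [← hg]
    push_cast
    rw [smul_val, φ_o₁]
    group
  have hmem : ((y * x⁻¹ : S.RT)).val ∈ S.P₁ := hval ▸ p.2
  have hop : S.o₁ p = S.mv₁ x y hmem := congrArg S.o₁ (Subtype.ext hval.symm)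
  rw [EV_congr S E rfl hop hg (mv₁_smul S x y hmem), EV_mv₁ S E x y hmem,
    DD₁_eq S f E hE, DD₁_eq S f E hE, LF_left_o₁]
  have hpt : (S.o₁ p)⁻¹ • y = x := by rw [inv_smul_eq_iff]; exact hg.symm
  rw [hpt]

include hE in
lemma EV_case₂ (p : ↥S.P₂) (x y : S.RT) (hg : S.o₂ p • x = y) :
    S.EV E x y (S.o₂ p) hg = (S.LF f (S.o₂ p)).left y := by
  have hval : ((y * x⁻¹ : S.RT)).val = p.val := by
    rw [← hg]
    push_cast
    rw [smul_val, φ_o₂]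
    group
  have hmem : ((y * x⁻¹ : S.RT)).val ∈ S.P₂ := hval ▸ p.2
  have hop : S.o₂ p = S.mv₂ x y hmem := congrArg S.o₂ (Subtype.ext hval.symm)
  rw [EV_congr S E rfl hop hg (mv₂_smul S x y hmem), EV_mv₂ S E x y hmem,
    DD₂_eq S f E hE, DD₂_eq S f E hE, LF_left_o₂]
  have hpt : (S.o₂ p)⁻¹ • y = x := by rw [inv_smul_eq_iff]; exact hg.symm
  rw [hpt]

include hE in
lemma EV_eq_LF : ∀ (g : S.G) (x y : S.RT) (hg : g • x = y),
    S.EV E x y g hg = (S.LF f g).left y := by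
  intro g
  induction g using Monoid.PushoutI.induction_on with
  | of i p =>
    cases i with
    | true => exact EV_case₁ S f E hE p
    | false => exact EV_case₂ S f E hE p
  | base h =>
    intro x y hg
    have hb : Monoid.PushoutI.base (famInc S.P₁ S.P₂) h
        = S.o₂ (famInc S.P₁ S.P₂ false h) := (o₂_base S h).symm
    rw [EV_congr S E rfl hb hg (by rw [← hb]; exact hg)]
    have hR : (S.LF f (Monoid.PushoutI.base (famInc S.P₁ S.P₂) h)).left y
        = (S.LF f (S.o₂ (famInc S.P₁ S.P₂ false h))).left y := by rw [hb]
    rw [hR]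
    exact EV_case₂ S f E hE _ x y _
  | mul gx gy ihx ihy =>
    intro x y hg
    have h1 : gy • x = gy • x := rfl
    have h2 : gx • (gy • x) = y := by rw [← mul_smul]; exact hg
    have hpt : gx⁻¹ • y = gy • x := by rw [inv_smul_eq_iff]; exact h2.symm
    calc S.EV E x y (gx * gy) hg
        = S.EV E (gy • x) y gx h2 * S.EV E x (gy • x) gy h1 := (EV_comp S E h1 h2).symm
      _ = (S.LF f gx).left y * (S.LF f gy).left (gx⁻¹ • y) := by
          rw [ihx, ihy, hpt]
      _ = (S.LF f (gx * gy)).left y := (LF_left_mul S f gx gy y).symm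

include hE in
lemma E_eq_FF : E = S.FF f := by
  apply Functor.hext
  · intro a
    exact Subsingleton.elim _ _
  · refine ActionCategory.cases ?_
    intro t g
    apply heq_of_eq
    have h1 : E.map (ActionCategory.homOfPair t g)
        = S.EV E (g⁻¹ • t) t g (smul_inv_smul g t) := rfl
    rw [h1, EV_eq_LF S f E hE]
    rfl

/-- The Bass–Serre style freeness: the action groupoid of the pushout acting on
the image subgroup is a free groupoid. -/
noncomputable def freeGroupoidInst : IsFreeGroupoid S.ACat where
  quiverGenerators := ⟨fun a b => S.Gen a b⟩
  of := fun {_ _} e => S.genOf e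
  unique_lift := by
    intro X _ f
    refine ⟨S.FF f, ?_, ?_⟩
    · intro a b e
      exact FF_map_gen S f e
    · intro E hE
      exact E_eq_FF S f E (fun a b e => hE a b e)

instance : Nonempty S.RT := ⟨1⟩

instance : MulAction.IsPretransitive S.G S.RT := by
  constructor
  intro x y
  obtain ⟨g, hg⟩ := (y * x⁻¹).2
  refine ⟨g, ?_⟩
  apply Subtype.ext
  rw [smul_val]
  show S.φ g * x.val = y.val
  rw [hg]
  push_cast
  group

/-- The kernel of the amalgam map is a free group. -/
theorem kerFree : IsFreeGroup ↥S.φ.ker := by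
  letI := freeGroupoidInst S
  haveI hc : @CategoryTheory.IsConnected S.ACat Groupoid.toCategory := by
    exact ActionCategory.instIsConnectedOfIsPretransitiveOfNonempty
  have hfree : IsFreeGroup (@CategoryTheory.End S.ACat (Groupoid.toCategory (obj := S.ACat)).toCategoryStruct (S.pt 1)) :=
    IsFreeGroupoid.endIsFreeOfConnectedFree (S.pt 1)
  letI := hfree
  refine IsFreeGroup.ofMulEquiv
    (G := @CategoryTheory.End S.ACat (Groupoid.toCategory (obj := S.ACat)).toCategoryStruct (S.pt 1)) (H := ↥S.φ.ker) ?_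
  refine
    { toFun := fun m => ⟨(show S.G from m.val), ?_⟩
      invFun := fun k => ⟨k.val, ?_⟩
      left_inv := fun m => Subtype.ext rfl
      right_inv := fun k => Subtype.ext rfl
      map_mul' := fun m m' => Subtype.ext rfl }
  · have h2 : (show S.G from m.val) • (1 : S.RT) = 1 := m.2
    have h3 := congrArg Subtype.val h2
    rw [smul_val] at h3
    simp only [OneMemClass.coe_one, mul_one] at h3
    exact h3
  · show (k.val : S.G) • (1 : S.RT) = 1
    apply Subtype.ext
    rw [smul_val]
    have hk : S.φ k.val = 1 := k.2
    simp [hk]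

end Final
end S19

/-- with `P₁ = {A ∈ SL₃(ℤ) : A₂₁ = A₃₁ = 0}`,
`P₂ = {A ∈ SL₃(ℤ) : A₃₁ = A₃₂ = 0}`, `B = P₁ ∩ P₂` and
`φ : P₁ ∗_B P₂ → SL₃(ℤ)` the homomorphism induced by the inclusions, the
kernel of `φ` is a free group and is not finitely generated. -/
theorem stmt19 (P₁ P₂ : Subgroup SL3)
    (hP₁ : ∀ A : SL3, A ∈ P₁ ↔ (A.1 1 0 = 0 ∧ A.1 2 0 = 0))
    (hP₂ : ∀ A : SL3, A ∈ P₂ ↔ (A.1 2 0 = 0 ∧ A.1 2 1 = 0)) :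
    IsFreeGroup (amalgHom P₁ P₂).ker ∧ ¬ Group.FG (amalgHom P₁ P₂).ker := by
  exact ⟨S19.kerFree ⟨P₁, P₂, hP₁, hP₂⟩, S19.Setup.notFG ⟨P₁, P₂, hP₁, hP₂⟩⟩
end
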